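/- arXiv:0906.4097 — 5 statements merged into one kernel-verified Lean document; each statement's English description precedes it below -/
import Mathlib

section
/- The face operator on lattice paths is well-defined: if p is a lattice path in the box Q(k_1,...,m,...,k_n) (with m ≥ 1 in coordinate r) and D^r_i : ℤ^n → ℤ^n is the map fixing coordinates except sending a_r to a_r if a_r ≤ i and to a_r − 1 if a_r > i (0 ≤ i ≤ m), then the image D^r_i(p), with the unique repeated consecutive point removed, is a lattice path in Q(k_1,...,m−1,...,k_n); moreover exactly two points x', x'' of p satisfy D^r_i(x') = D^r_i(x''). -/
/-- `p` is a lattice path with `N` steps (`N+1` points) in `ℤ^n`. -/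
def IsLatticePath (n N : ℕ) (p : Fin (N + 1) → Fin n → ℤ) (tgt : Fin n → ℤ) : Prop :=
  (∀ j, p 0 j = 0) ∧ (∀ j, p (Fin.last N) j = tgt j) ∧
  ∀ a : Fin N, ∃ j : Fin n, p a.succ j = p a.castSucc j + 1 ∧
    ∀ j' : Fin n, j' ≠ j → p a.succ j' = p a.castSucc j'

/-- The map `D^r_i : ℤ^n → ℤ^n` fixing all coordinates except sending `a_r` to
`a_r` if `a_r ≤ i` and to `a_r - 1` if `a_r > i`. -/
def Dmap (n : ℕ) (r : Fin n) (i : ℕ) (x : Fin n → ℤ) : Fin n → ℤ :=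
  fun j => if j = r ∧ (i : ℤ) < x r then x j - 1 else x j

section Aux

variable {n M : ℕ}

lemma lp_step_le (p : Fin (M + 1) → Fin n → ℤ)
    (hstep : ∀ a : Fin M, ∃ j : Fin n, p a.succ j = p a.castSucc j + 1 ∧
      ∀ j' : Fin n, j' ≠ j → p a.succ j' = p a.castSucc j') (a : Fin M) (j : Fin n) :
    p a.castSucc j ≤ p a.succ j ∧ p a.succ j ≤ p a.castSucc j + 1 := by
  obtain ⟨j0, h1, h2⟩ := hstep a
  by_cases hj : j = j0
  · subst hj; omega
  · rw [h2 j hj]; omega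

lemma lp_mono (p : Fin (M + 1) → Fin n → ℤ)
    (hstep : ∀ a : Fin M, ∃ j : Fin n, p a.succ j = p a.castSucc j + 1 ∧
      ∀ j' : Fin n, j' ≠ j → p a.succ j' = p a.castSucc j') (j : Fin n) :
    Monotone (fun t => p t j) :=
  Fin.monotone_iff_le_succ.2 fun a => (lp_step_le p hstep a j).1

lemma lp_sum (p : Fin (M + 1) → Fin n → ℤ) (h0 : ∀ j, p 0 j = 0)
    (hstep : ∀ a : Fin M, ∃ j : Fin n, p a.succ j = p a.castSucc j + 1 ∧
      ∀ j' : Fin n, j' ≠ j → p a.succ j' = p a.castSucc j') (t : Fin (M + 1)) :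
    ∑ j, p t j = t.val := by
  induction t using Fin.induction with
  | zero => simp [h0]
  | succ a ih =>
    obtain ⟨j0, h1, h2⟩ := hstep a
    have key : ∑ j, (p a.succ j - p a.castSucc j) = 1 := by
      rw [Finset.sum_eq_single j0]
      · omega
      · intro j' _ hj'; rw [h2 j' hj']; ring
      · intro h; exact absurd (Finset.mem_univ j0) h
    rw [Finset.sum_sub_distrib] at key
    have h3 : ∑ j, p a.succ j = ∑ j, p a.castSucc j + 1 := by omega
    rw [h3, ih, Fin.coe_castSucc, Fin.val_succ]
    push_cast
    ring

lemma Dmap_of_le {r : Fin n} {i : ℕ} {x : Fin n → ℤ} (hx : x r ≤ i) :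
    Dmap n r i x = x := by
  funext j
  unfold Dmap
  rw [if_neg]
  rintro ⟨-, h⟩
  omega

lemma Dmap_of_lt {r : Fin n} {i : ℕ} {x : Fin n → ℤ} (hx : (i : ℤ) < x r) (j : Fin n) :
    Dmap n r i x j = x j - if j = r then 1 else 0 := by
  unfold Dmap
  by_cases h : j = r <;> simp [h, hx]

lemma Dmap_ne {r : Fin n} {i : ℕ} {x : Fin n → ℤ} {j : Fin n} (hj : j ≠ r) :
    Dmap n r i x j = x j := by
  unfold Dmap
  rw [if_neg]
  rintro ⟨h, -⟩
  exact hj h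

end Aux

/-- The face operator on lattice paths is well defined: if `p` is a lattice path
in `Q(k_1,…,k_n)` with `k_r ≥ 1` and `0 ≤ i ≤ k_r`, then exactly two points of `p`
are identified by `D^r_i`, and after deleting one repeated point the image
`D^r_i(p)` is a lattice path in the box with `k_r` replaced by `k_r - 1`. -/
theorem stmt7 (n N : ℕ) (k : Fin n → ℕ) (r : Fin n) (i : ℕ)
    (hkr : 1 ≤ k r) (hi : i ≤ k r)
    (p : Fin (N + 2) → Fin n → ℤ)
    (hp : IsLatticePath n (N + 1) p (fun j => (k j : ℤ) + 1)) :
    (∃! ab : Fin (N + 2) × Fin (N + 2),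
        ab.1 < ab.2 ∧ Dmap n r i (p ab.1) = Dmap n r i (p ab.2)) ∧
    (∃ a : Fin (N + 2),
        IsLatticePath n N (fun b : Fin (N + 1) => Dmap n r i (p (a.succAbove b)))
          (fun j => (Function.update k r (k r - 1) j : ℤ) + 1)) := by
  obtain ⟨h0, hlast, hstep⟩ := hp
  have hlast' : ∀ j, p (Fin.last (N + 1)) j = (k j : ℤ) + 1 := hlast
  have hi' : (i : ℤ) ≤ (k r : ℤ) := by exact_mod_cast hi
  have hkr' : (1 : ℤ) ≤ (k r : ℤ) := by exact_mod_cast hkr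
  have hmono : ∀ (j : Fin n) (s t : Fin (N + 2)), s ≤ t → p s j ≤ p t j :=
    fun j s t hst => lp_mono p hstep j hst
  have hsum : ∀ t : Fin (N + 2), ∑ j, p t j = t.val := lp_sum p h0 hstep
  -- existence of a crossing step
  have hex : ∃ a : Fin (N + 1), p a.castSucc r ≤ i ∧ (i : ℤ) < p a.succ r := by
    by_contra hc
    push_neg at hc
    have hall : ∀ t : Fin (N + 2), p t r ≤ i := by
      intro t
      induction t using Fin.induction with
      | zero => rw [h0]; exact Int.natCast_nonneg i
      | succ a ih => exact hc a ih
    have h1 := hall (Fin.last (N + 1))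
    rw [hlast' r] at h1
    omega
  obtain ⟨A, hA1, hA2⟩ := hex
  have hAle := lp_step_le p hstep A r
  have hcast : p A.castSucc r = i := by omega
  have hsucc : p A.succ r = i + 1 := by omega
  have hother : ∀ j : Fin n, j ≠ r → p A.succ j = p A.castSucc j := by
    obtain ⟨j0, hj1, hj2⟩ := hstep A
    have hj0 : j0 = r := by
      by_contra h
      have := hj2 r (Ne.symm h)
      omega
    subst hj0
    exact fun j hj => hj2 j hj
  have hDeq : Dmap n r i (p A.castSucc) = Dmap n r i (p A.succ) := by
    funext j
    by_cases hj : j = r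
    · subst hj
      unfold Dmap
      rw [if_neg (by rintro ⟨-, h⟩; omega), if_pos ⟨rfl, by omega⟩]
      omega
    · rw [Dmap_ne hj, Dmap_ne hj, hother j hj]
  -- value bounds
  have hle : ∀ t : Fin (N + 2), t.val ≤ A.val → p t r ≤ i := by
    intro t ht
    have := hmono r t A.castSucc (by rw [Fin.le_def]; simpa using ht)
    omega
  have hgt : ∀ t : Fin (N + 2), A.val + 1 ≤ t.val → (i : ℤ) + 1 ≤ p t r := by
    intro t ht
    have := hmono r A.succ t (by rw [Fin.le_def]; simpa using ht)
    omega
  constructor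
  · -- uniqueness of identified pair
    refine ⟨(A.castSucc, A.succ), ⟨A.castSucc_lt_succ, hDeq⟩, ?_⟩
    rintro ⟨x, y⟩ ⟨hxy, hD⟩
    have hDj : ∀ j, Dmap n r i (p x) j = Dmap n r i (p y) j := fun j => congrFun hD j
    have hxj : ∀ j : Fin n, j ≠ r → p x j = p y j := by
      intro j hj
      have := hDj j
      rwa [Dmap_ne hj, Dmap_ne hj] at this
    have hxy' : x.val < y.val := hxy
    have hdiff : p y r - p x r = (y.val : ℤ) - x.val := by
      have h1 : ∑ j, (p y j - p x j) = p y r - p x r := by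
        rw [Finset.sum_eq_single r]
        · intro j' _ hj'; rw [hxj j' hj']; ring
        · intro h; exact absurd (Finset.mem_univ r) h
      rw [Finset.sum_sub_distrib, hsum, hsum] at h1
      omega
    have hDr := hDj r
    unfold Dmap at hDr
    have hcx : (r = r ∧ (i : ℤ) < p x r) ↔ ((i : ℤ) < p x r) := by simp
    have hcy : (r = r ∧ (i : ℤ) < p y r) ↔ ((i : ℤ) < p y r) := by simp
    rw [if_congr hcx rfl rfl, if_congr hcy rfl rfl] at hDr
    have hxr : p x r = i := by split_ifs at hDr <;> omega
    have hyr : p y r = i + 1 := by split_ifs at hDr <;> omega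
    have hyx : y.val = x.val + 1 := by omega
    have hxval : x.val = A.val := by
      by_contra h
      rcases Nat.lt_or_ge x.val A.val with h1 | h1
      · have := hle y (by omega)
        omega
      · have h2 : A.val < x.val := by omega
        have := hgt x (by omega)
        omega
    rw [Prod.ext_iff]
    refine ⟨Fin.ext (by simp [hxval]), Fin.ext (by simp [Fin.val_succ]; omega)⟩
  · -- the deleted-point path
    have hqlow : ∀ c : Fin (N + 1), c.val ≤ A.val →
        Dmap n r i (p ((A.castSucc).succAbove c)) = p ⟨c.val, by omega⟩ := by
      intro c hc
      rcases Nat.lt_or_ge c.val A.val with h1 | h1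
      · have hidx : (A.castSucc).succAbove c = c.castSucc := by
          rw [Fin.succAbove, if_pos (by rw [Fin.lt_def]; simpa using h1)]
        have e : (⟨c.val, by omega⟩ : Fin (N + 2)) = c.castSucc := Fin.ext (by simp)
        rw [hidx, Dmap_of_le (hle c.castSucc (by simpa using hc)), e]
      · have hcA : c = A := Fin.ext (by omega)
        subst hcA
        have hidx : (c.castSucc).succAbove c = c.succ := by
          rw [Fin.succAbove, if_neg (by rw [Fin.lt_def]; simp)]
        have e : (⟨c.val, by omega⟩ : Fin (N + 2)) = c.castSucc := Fin.ext (by simp)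
        rw [hidx, ← hDeq, Dmap_of_le (by omega), e]
    have hqhigh : ∀ c : Fin (N + 1), A.val < c.val → ∀ j : Fin n,
        Dmap n r i (p ((A.castSucc).succAbove c)) j =
          p ⟨c.val + 1, by omega⟩ j - if j = r then 1 else 0 := by
      intro c hc j
      have hidx : (A.castSucc).succAbove c = c.succ := by
        rw [Fin.succAbove, if_neg (by rw [Fin.lt_def]; simp; omega)]
      have e : (⟨c.val + 1, by omega⟩ : Fin (N + 2)) = c.succ := Fin.ext (by simp)
      rw [hidx, Dmap_of_lt (by have := hgt c.succ (by simp; omega); omega) j, e]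
    refine ⟨A.castSucc, ?_, ?_, ?_⟩
    · -- starts at 0
      intro j
      have h := hqlow 0 (Nat.zero_le _)
      simp only [h]
      have e : (⟨(0 : Fin (N + 1)).val, by omega⟩ : Fin (N + 2)) = 0 := Fin.ext (by simp)
      rw [e, h0]
    · -- ends at the new target
      intro j
      rcases Nat.lt_or_ge A.val N with hA | hA
      · have h := hqhigh (Fin.last N) (by simpa using hA) j
        simp only [h]
        have e : (⟨(Fin.last N).val + 1, by omega⟩ : Fin (N + 2)) = Fin.last (N + 1) :=
          Fin.ext (by simp)
        rw [e, hlast' j]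
        by_cases hj : j = r
        · subst hj
          rw [Function.update_self, if_pos rfl]
          omega
        · rw [Function.update_of_ne hj, if_neg hj]
          ring
      · -- A.val = N : the last point is the crossing point
        have hAN : A.val = N := by omega
        have h := hqlow (Fin.last N) (by simp [hAN])
        simp only [h]
        have e : (⟨(Fin.last N).val, by omega⟩ : Fin (N + 2)) = A.castSucc :=
          Fin.ext (by simp [hAN])
        rw [e]
        have hAsucc : A.succ = Fin.last (N + 1) := Fin.ext (by simp [hAN])
        have hir : (i : ℤ) = (k r : ℤ) := by
          have := hlast' r
          rw [← hAsucc] at this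
          omega
        by_cases hj : j = r
        · subst hj
          rw [Function.update_self, hcast]
          omega
        · rw [Function.update_of_ne hj, ← hother j hj, hAsucc, hlast' j]
    · -- steps
      intro b
      rcases Nat.lt_or_ge b.val A.val with hb | hb
      · -- both points strictly before the crossing
        have h1 := hqlow b.castSucc (by simpa using Nat.le_of_lt hb)
        have h2 := hqlow b.succ (by simpa using hb)
        simp only [h1, h2]
        have e1 : (⟨(b.castSucc).val, by omega⟩ : Fin (N + 2)) =
            (⟨b.val, by omega⟩ : Fin (N + 1)).castSucc := Fin.ext (by simp)
        have e2 : (⟨(b.succ).val, by omega⟩ : Fin (N + 2)) =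
            (⟨b.val, by omega⟩ : Fin (N + 1)).succ := Fin.ext (by simp)
        rw [e1, e2]
        exact hstep ⟨b.val, by omega⟩
      · -- both points at or after the crossing
        have hc1 : ∀ j : Fin n, Dmap n r i (p ((A.castSucc).succAbove b.castSucc)) j =
            p ⟨b.val + 1, by omega⟩ j - if j = r then 1 else 0 := by
          rcases Nat.lt_or_ge A.val b.val with h1 | h1
          · intro j
            have := hqhigh b.castSucc (by simpa using h1) j
            simpa using this
          · -- b.val = A.val
            have hbA : b.val = A.val := by omega
            intro j
            have h := hqlow b.castSucc (by simp [hbA])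
            simp only [h]
            have e1 : (⟨(b.castSucc).val, by omega⟩ : Fin (N + 2)) = A.castSucc :=
              Fin.ext (by simp [hbA])
            have e2 : (⟨b.val + 1, by omega⟩ : Fin (N + 2)) = A.succ :=
              Fin.ext (by simp [hbA])
            rw [e1, e2]
            by_cases hj : j = r
            · subst hj; rw [if_pos rfl]; omega
            · rw [if_neg hj, hother j hj]; ring
        have hc2 : ∀ j : Fin n, Dmap n r i (p ((A.castSucc).succAbove b.succ)) j =
            p ⟨b.val + 2, by omega⟩ j - if j = r then 1 else 0 := by
          intro j
          have := hqhigh b.succ (by simp; omega) j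
          simpa using this
        have e1 : (⟨b.val + 1, by omega⟩ : Fin (N + 2)) =
            (⟨b.val + 1, by omega⟩ : Fin (N + 1)).castSucc := Fin.ext (by simp)
        have e2 : (⟨b.val + 2, by omega⟩ : Fin (N + 2)) =
            (⟨b.val + 1, by omega⟩ : Fin (N + 1)).succ := Fin.ext (by simp)
        obtain ⟨j0, hj1, hj2⟩ := hstep (⟨b.val + 1, by omega⟩ : Fin (N + 1))
        refine ⟨j0, ?_, ?_⟩
        · simp only [hc1, hc2]
          rw [e1, e2, hj1]
          ring
        · intro j' hj'
          simp only [hc1, hc2]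
          rw [e1, e2, hj2 j' hj']
end

section
/- The degeneracy operator on lattice paths is well-defined: for a lattice path p in Q(k_1,...,m,...,k_n) and the map S^r_i : ℤ^n → ℤ^n fixing all coordinates except sending a_r to a_r if a_r ≤ i and a_r + 1 if a_r > i (0 ≤ i ≤ m), the image S^r_i(p) fails to be a lattice path in Q(k_1,...,m+1,...,k_n) at exactly one place, and there is a unique point x̂ whose insertion makes S^r_i(p) into a lattice path; furthermore x̂ is an internal point (neither an angle nor an extremal point) of the resulting path. -/
/-- The map `S^r_i : ℤ^n → ℤ^n` fixing all coordinates except sending `a_r` to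
`a_r` if `a_r ≤ i` and to `a_r + 1` if `a_r > i`. -/
def Smap (n : ℕ) (r : Fin n) (i : ℕ) (x : Fin n → ℤ) : Fin n → ℤ :=
  fun j => if j = r ∧ (i : ℤ) < x r then x j + 1 else x j

namespace Stmt8aux

lemma smap_step_valid (n : ℕ) (r : Fin n) (i : ℕ) (x y : Fin n → ℤ) (j : Fin n)
    (hy : y j = x j + 1) (hother : ∀ j', j' ≠ j → y j' = x j')
    (hnot : ¬(j = r ∧ x r = (i:ℤ))) :
    ∃ j0, Smap n r i y j0 = Smap n r i x j0 + 1 ∧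
      ∀ j', j' ≠ j0 → Smap n r i y j' = Smap n r i x j' := by
  refine ⟨j, ?_, fun j' hj' => ?_⟩
  · by_cases hjr : j = r
    · subst hjr
      have hxr : x j ≠ (i:ℤ) := fun h => hnot ⟨rfl, h⟩
      unfold Smap
      simp only [eq_self_iff_true, true_and]
      split_ifs <;> omega
    · have : y r = x r := hother r (fun h => hjr h.symm)
      simp only [Smap, this, if_neg (by simp [hjr] : ¬(j = r ∧ (i:ℤ) < x r))]
      exact hy
  · by_cases hj'r : j' = r
    · subst hj'r
      have hyr : y j' = x j' := hother j' hj'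
      simp only [Smap, hyr]
    · simp [Smap, hj'r, hother j' hj']

lemma smap_step_fail (n : ℕ) (r : Fin n) (i : ℕ) (x y : Fin n → ℤ)
    (hxr : x r = (i:ℤ)) (hyr : y r = x r + 1) :
    ¬ ∃ j0, Smap n r i y j0 = Smap n r i x j0 + 1 ∧
      ∀ j', j' ≠ j0 → Smap n r i y j' = Smap n r i x j' := by
  rintro ⟨j0, h1, h2⟩
  have hsy : Smap n r i y r = (i:ℤ) + 2 := by
    simp only [Smap, eq_self_iff_true, true_and]; rw [if_pos (by omega)]; omega
  have hsx : Smap n r i x r = (i:ℤ) := by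
    simp only [Smap, eq_self_iff_true, true_and]; rw [if_neg (by omega)]; omega
  by_cases h : r = j0
  · subst h; omega
  · have := h2 r h; omega

lemma smap_step_diff (n : ℕ) (r : Fin n) (i : ℕ) (x y : Fin n → ℤ)
    (hxr : x r = (i:ℤ)) (hyr : y r = x r + 1) (hother : ∀ j', j' ≠ r → y j' = x j') :
    ∀ j, Smap n r i y j = Smap n r i x j + (if j = r then 2 else 0) := by
  intro j
  by_cases hj : j = r
  · subst hj
    simp only [Smap, eq_self_iff_true, true_and, if_pos rfl]
    split_ifs <;> omega
  · simp [Smap, hj, hother j hj]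

lemma psmap_congr {n : ℕ} (r : Fin n) (i : ℕ) {M : ℕ} (p : Fin M → Fin n → ℤ)
    {s t : Fin M} (h : (s:ℕ) = (t:ℕ)) (j : Fin n) :
    Smap n r i (p s) j = Smap n r i (p t) j := by rw [show s = t from Fin.ext h]

lemma fin_mk_eq {M : ℕ} {s t : ℕ} (hs : s < M) (ht : t < M) (h : s = t) :
    (⟨s, hs⟩ : Fin M) = ⟨t, ht⟩ := by subst h; rfl

end Stmt8aux

open Stmt8aux in
/-- The degeneracy operator on lattice paths is well defined: the stretched
sequence `S^r_i(p)` fails to be a lattice path at exactly one place; there is a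
unique point `x̂` whose insertion (at a unique position `c`) turns it into a
lattice path in the enlarged box; and the new point is an internal point
(neither extremal nor an angle) of the resulting path. -/
theorem stmt8 (n N : ℕ) (k : Fin n → ℕ) (r : Fin n) (i : ℕ) (hi : i ≤ k r)
    (p : Fin (N + 2) → Fin n → ℤ)
    (hp : IsLatticePath n (N + 1) p (fun j => (k j : ℤ) + 1)) :
    (∃! a : Fin (N + 1),
      ¬ ∃ j : Fin n, Smap n r i (p a.succ) j = Smap n r i (p a.castSucc) j + 1 ∧
          ∀ j' : Fin n, j' ≠ j → Smap n r i (p a.succ) j' = Smap n r i (p a.castSucc) j') ∧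
    (∃! cq : Fin (N + 3) × (Fin (N + 3) → Fin n → ℤ),
      (∀ b : Fin (N + 2), cq.2 (cq.1.succAbove b) = Smap n r i (p b)) ∧
      IsLatticePath n (N + 2) cq.2 (fun j => (Function.update k r (k r + 1) j : ℤ) + 1)) ∧
    (∀ cq : Fin (N + 3) × (Fin (N + 3) → Fin n → ℤ),
      ((∀ b : Fin (N + 2), cq.2 (cq.1.succAbove b) = Smap n r i (p b)) ∧
        IsLatticePath n (N + 2) cq.2 (fun j => (Function.update k r (k r + 1) j : ℤ) + 1)) →
      (cq.1 : ℕ) ≠ 0 ∧ (cq.1 : ℕ) ≠ N + 2 ∧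
      ∀ d e : Fin (N + 2), (d : ℕ) + 1 = (cq.1 : ℕ) → (e : ℕ) = (cq.1 : ℕ) →
        (fun j => cq.2 d.succ j - cq.2 d.castSucc j) =
        (fun j => cq.2 e.succ j - cq.2 e.castSucc j)) := by
  classical
  obtain ⟨h0, hl, hs⟩ := hp
  -- basic step bounds
  have hstep : ∀ (b : Fin (N+1)) (j : Fin n),
      p b.castSucc j ≤ p b.succ j ∧ p b.succ j ≤ p b.castSucc j + 1 := by
    intro b j
    obtain ⟨j0, h1, h2⟩ := hs b
    by_cases h : j = j0
    · subst h; omega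
    · rw [h2 j h]; omega
  -- monotonicity in each coordinate
  have hmono : ∀ (j : Fin n), Monotone (fun t : Fin (N+2) => p t j) := by
    intro j
    exact Fin.monotone_iff_le_succ.2 (fun b => (hstep b j).1)
  have ecs : ∀ b : Fin (N+1), b.castSucc = (⟨(b:ℕ), Nat.lt_succ_of_lt b.isLt⟩ : Fin (N+2)) :=
    fun b => rfl
  have esu : ∀ b : Fin (N+1), b.succ = (⟨(b:ℕ)+1, Nat.succ_lt_succ b.isLt⟩ : Fin (N+2)) :=
    fun b => rfl
  have ecs2 : ∀ b : Fin (N+2), b.castSucc = (⟨(b:ℕ), Nat.lt_succ_of_lt b.isLt⟩ : Fin (N+3)) :=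
    fun b => rfl
  have esu2 : ∀ b : Fin (N+2), b.succ = (⟨(b:ℕ)+1, Nat.succ_lt_succ b.isLt⟩ : Fin (N+3)) :=
    fun b => rfl
  -- evaluation at endpoints
  have h0' : ∀ (hm : 0 < N + 2) (j : Fin n), p ⟨0, hm⟩ j = 0 := by
    intro hm j
    have e : (⟨0, hm⟩ : Fin (N+2)) = 0 := Fin.mk_zero
    rw [e]; exact h0 j
  have hl' : ∀ (hm : N+1 < N + 2) (j : Fin n), p ⟨N+1, hm⟩ j = (k j : ℤ) + 1 := by
    intro hm j
    have e : (⟨N+1, hm⟩ : Fin (N+2)) = Fin.last (N+1) := rfl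
    rw [e]; exact hl j
  have hikr : (i:ℤ) ≤ (k r : ℤ) := by exact_mod_cast hi
  -- find the crossing step a
  have hPex : ∃ t : ℕ, ∃ ht : t < N + 2, (i:ℤ) < p ⟨t, ht⟩ r :=
    ⟨N+1, by omega, by rw [hl' (by omega) r]; omega⟩
  have hpos : 0 < Nat.find hPex :=
    (Nat.find_pos (h := hPex)).2 (by rintro ⟨hm, hlt⟩; rw [h0' hm r] at hlt; omega)
  have hfle : Nat.find hPex ≤ N+1 :=
    Nat.find_le ⟨by omega, by rw [hl' (by omega) r]; omega⟩
  set a : Fin (N+1) := ⟨Nat.find hPex - 1, by omega⟩ with ha_def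
  have haval : (a:ℕ) = Nat.find hPex - 1 := rfl
  have hsucc_gt : (i:ℤ) < p a.succ r := by
    obtain ⟨hm, hlt⟩ := Nat.find_spec hPex
    rw [esu a, fin_mk_eq _ hm (by omega)]
    exact hlt
  have hcast_le : p a.castSucc r ≤ (i:ℤ) := by
    have hmin := Nat.find_min hPex (show Nat.find hPex - 1 < Nat.find hPex by omega)
    simp only [not_exists, not_lt] at hmin
    rw [ecs a]
    exact hmin (by omega)
  obtain ⟨j0, hj1, hj2⟩ := hs a
  have hj0r : j0 = r := by
    by_contra h
    have := hj2 r (fun hh => h hh.symm)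
    omega
  rw [hj0r] at hj1 hj2
  have har0 : p a.castSucc r = (i:ℤ) := by
    have := (hstep a r).2
    omega
  have har1 : p a.succ r = (i:ℤ) + 1 := by omega
  -- a is the unique crossing
  have hbefore : ∀ b : Fin (N+1), (b:ℕ) < (a:ℕ) → p b.succ r ≤ (i:ℤ) := by
    intro b hb
    have hle : b.succ ≤ a.castSucc := by
      rw [esu b, ecs a]; exact Fin.mk_le_mk.2 (by omega)
    have := hmono r hle
    simp only at this
    omega
  have hafter : ∀ b : Fin (N+1), (a:ℕ) < (b:ℕ) → (i:ℤ) + 1 ≤ p b.castSucc r := by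
    intro b hb
    have hle : a.succ ≤ b.castSucc := by
      rw [esu a, ecs b]; exact Fin.mk_le_mk.2 (by omega)
    have := hmono r hle
    simp only at this
    omega
  have hvalid : ∀ b : Fin (N+1), b ≠ a →
      ∃ j0, Smap n r i (p b.succ) j0 = Smap n r i (p b.castSucc) j0 + 1 ∧
        ∀ j', j' ≠ j0 → Smap n r i (p b.succ) j' = Smap n r i (p b.castSucc) j' := by
    intro b hb
    obtain ⟨j1, hb1, hb2⟩ := hs b
    refine smap_step_valid n r i _ _ j1 hb1 hb2 ?_
    rintro ⟨rfl, hbr⟩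
    have hbv : (b:ℕ) ≠ (a:ℕ) := fun hh => hb (Fin.ext hh)
    rcases Nat.lt_or_ge (b:ℕ) (a:ℕ) with h | h
    · have := hbefore b h; omega
    · have := hafter b (by omega); omega
  have hfail : ¬ ∃ j0, Smap n r i (p a.succ) j0 = Smap n r i (p a.castSucc) j0 + 1 ∧
      ∀ j', j' ≠ j0 → Smap n r i (p a.succ) j' = Smap n r i (p a.castSucc) j' :=
    smap_step_fail n r i _ _ har0 (by omega)
  -- Smap facts at the crossing
  have hSA : ∀ j, Smap n r i (p a.castSucc) j = p a.castSucc j := by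
    intro j
    unfold Smap
    rw [if_neg]
    rintro ⟨-, hlt⟩
    omega
  have hdiff : ∀ j, Smap n r i (p a.succ) j
      = Smap n r i (p a.castSucc) j + (if j = r then 2 else 0) :=
    smap_step_diff n r i _ _ har0 (by omega) hj2
  -- the inserted point and the new path
  set xh : Fin n → ℤ := fun j => if j = r then (i:ℤ)+1 else p a.castSucc j with hxh_def
  set c : Fin (N+3) := ⟨(a:ℕ)+1, Nat.lt_succ_of_lt (Nat.succ_lt_succ a.isLt)⟩ with hc_def
  set q : Fin (N+3) → Fin n → ℤ := fun t j =>
    if ht : (t:ℕ) ≤ (a:ℕ) then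
      Smap n r i (p ⟨(t:ℕ), by have := a.isLt; omega⟩) j
    else if (t:ℕ) = (a:ℕ)+1 then xh j
    else Smap n r i (p ⟨(t:ℕ)-1, by have := t.isLt; omega⟩) j with hq_def
  have hcval : (c:ℕ) = (a:ℕ)+1 := rfl
  -- pointwise values of q
  have hqle : ∀ (t : Fin (N+3)) (h2 : (t:ℕ) ≤ (a:ℕ)) (h1 : (t:ℕ) < N+2) (j : Fin n),
      q t j = Smap n r i (p ⟨(t:ℕ), h1⟩) j := by
    intro t h2 h1 j
    rw [hq_def]
    simp only
    rw [dif_pos h2]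
  have hqeq : ∀ (t : Fin (N+3)) (h2 : (t:ℕ) = (a:ℕ)+1) (j : Fin n), q t j = xh j := by
    intro t h2 j
    rw [hq_def]
    simp only
    rw [dif_neg (by omega), if_pos h2]
  have hqgt : ∀ (t : Fin (N+3)) (h2 : (a:ℕ)+1 < (t:ℕ)) (h1 : (t:ℕ)-1 < N+2) (j : Fin n),
      q t j = Smap n r i (p ⟨(t:ℕ)-1, h1⟩) j := by
    intro t h2 h1 j
    rw [hq_def]
    simp only
    rw [dif_neg (by omega), if_neg (by omega)]
  -- values of any inserted path off the insertion point
  have hlow : ∀ (c' : Fin (N+3)) (q' : Fin (N+3) → Fin n → ℤ),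
      (∀ b : Fin (N+2), q' (c'.succAbove b) = Smap n r i (p b)) →
      ∀ (t : Fin (N+3)) (h1 : (t:ℕ) < N+2), (t:ℕ) < (c':ℕ) →
        q' t = Smap n r i (p ⟨(t:ℕ), h1⟩) := by
    intro c' q' hq t h1 h2
    have hsa : c'.succAbove ⟨(t:ℕ), h1⟩ = t := by
      rw [Fin.succAbove_of_castSucc_lt]
      · exact Fin.ext rfl
      · rw [Fin.lt_def]; exact h2
    have := hq ⟨(t:ℕ), h1⟩
    rw [hsa] at this
    exact this
  have hhigh : ∀ (c' : Fin (N+3)) (q' : Fin (N+3) → Fin n → ℤ),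
      (∀ b : Fin (N+2), q' (c'.succAbove b) = Smap n r i (p b)) →
      ∀ (t : Fin (N+3)) (h1 : (t:ℕ)-1 < N+2), (c':ℕ) < (t:ℕ) →
        q' t = Smap n r i (p ⟨(t:ℕ)-1, h1⟩) := by
    intro c' q' hq t h1 h2
    have hsa : c'.succAbove ⟨(t:ℕ)-1, h1⟩ = t := by
      rw [Fin.succAbove_of_le_castSucc]
      · exact Fin.ext (by simp; omega)
      · rw [Fin.le_def]; simp; omega
    have := hq ⟨(t:ℕ)-1, h1⟩
    rw [hsa] at this
    exact this
  have vcs : ∀ b : Fin (N+2), ((b.castSucc : Fin (N+3)):ℕ) = (b:ℕ) := fun b => rfl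
  have vsu : ∀ b : Fin (N+2), ((b.succ : Fin (N+3)):ℕ) = (b:ℕ)+1 := fun b => rfl
  -- q satisfies the insertion condition
  have hqins : ∀ b : Fin (N+2), q (c.succAbove b) = Smap n r i (p b) := by
    intro b
    funext j
    rcases Nat.lt_or_ge (b:ℕ) ((a:ℕ)+1) with h | h
    · have hsa : c.succAbove b = b.castSucc := by
        rw [Fin.succAbove_of_castSucc_lt]
        rw [Fin.lt_def]
        exact h
      rw [hsa, hqle b.castSucc (by rw [vcs]; omega) (by rw [vcs]; exact b.isLt) j]
      exact psmap_congr r i p (vcs b) j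
    · have hsa : c.succAbove b = b.succ := by
        rw [Fin.succAbove_of_le_castSucc]
        rw [Fin.le_def]
        exact h
      rw [hsa, hqgt b.succ (by rw [vsu]; omega) (by rw [vsu]; simpa using b.isLt) j]
      exact psmap_congr r i p (show (b:ℕ)+1-1 = (b:ℕ) from by omega) j
  -- q is a lattice path
  have hq0 : ∀ j, q 0 j = 0 := by
    intro j
    have h2 : ((0 : Fin (N+3)):ℕ) ≤ (a:ℕ) := by simp
    rw [hqle 0 h2 (by omega) j,
      psmap_congr r i p (show ((0 : Fin (N+3)):ℕ) = 0 from rfl) j (t := ⟨0, by omega⟩)]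
    unfold Smap
    simp only [h0']
    rw [if_neg (by rintro ⟨-, hlt⟩; omega)]
  have hqlast : ∀ j, q (Fin.last (N+2)) j = (Function.update k r (k r + 1) j : ℤ) + 1 := by
    intro j
    have hv : ((Fin.last (N+2)):ℕ) = N+2 := rfl
    rw [hqgt (Fin.last (N+2)) (by rw [hv]; have := a.isLt; omega) (by rw [hv]; omega) j,
      psmap_congr r i p (show ((Fin.last (N+2)):ℕ)-1 = N+1 from rfl) j
        (t := ⟨N+1, by omega⟩)]
    by_cases hj : j = r
    · subst hj
      unfold Smap
      rw [if_pos ⟨rfl, by rw [hl' (by omega) j]; omega⟩, hl' (by omega) j,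
        Function.update_self]
      push_cast
      ring
    · unfold Smap
      rw [if_neg (by rintro ⟨hh, -⟩; exact hj hh), hl' (by omega) j,
        Function.update_of_ne hj]
  have hqstep : ∀ b : Fin (N+2), ∃ j : Fin n, q b.succ j = q b.castSucc j + 1 ∧
      ∀ j' : Fin n, j' ≠ j → q b.succ j' = q b.castSucc j' := by
    intro b
    rcases Nat.lt_or_ge (b:ℕ) (a:ℕ) with h | h
    · -- step strictly below a : valid Smap step
      have hb' : (b:ℕ) < N+1 := by have := a.isLt; omega
      obtain ⟨j1, hs1, hs2⟩ := hvalid ⟨(b:ℕ), hb'⟩ (by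
        intro hh
        have : (b:ℕ) = (a:ℕ) := congrArg Fin.val hh
        omega)
      have key : ∀ j' : Fin n, q b.succ j' = Smap n r i (p (Fin.succ ⟨(b:ℕ), hb'⟩)) j' ∧
          q b.castSucc j' = Smap n r i (p (Fin.castSucc ⟨(b:ℕ), hb'⟩)) j' := by
        intro j'
        constructor
        · rw [hqle b.succ (by rw [vsu]; omega) (by rw [vsu]; have := a.isLt; omega) j']
          exact psmap_congr r i p rfl j'
        · rw [hqle b.castSucc (by rw [vcs]; omega) (by rw [vcs]; exact b.isLt) j']
          exact psmap_congr r i p rfl j'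
      refine ⟨j1, ?_, fun j' hj' => ?_⟩
      · rw [(key j1).1, (key j1).2]; exact hs1
      · rw [(key j').1, (key j').2]; exact hs2 j' hj'
    · rcases Nat.eq_or_lt_of_le h with h | h
      · -- step from a to the inserted point
        have key : ∀ j' : Fin n, q b.succ j' = xh j' ∧
            q b.castSucc j' = p a.castSucc j' := by
          intro j'
          constructor
          · exact hqeq b.succ (by rw [vsu]; omega) j'
          · rw [hqle b.castSucc (by rw [vcs]; omega) (by rw [vcs]; exact b.isLt) j']
            refine Eq.trans (psmap_congr r i p ?_ j' (t := a.castSucc)) (hSA j')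
            show (b:ℕ) = (a:ℕ)
            omega
        refine ⟨r, ?_, fun j' hj' => ?_⟩
        · rw [(key r).1, (key r).2, har0, hxh_def]
          simp
        · rw [(key j').1, (key j').2, hxh_def]
          simp [hj']
      · rcases Nat.eq_or_lt_of_le h with h | h
        · -- step from the inserted point to Smap (p a.succ)
          have key : ∀ j' : Fin n, q b.succ j' = Smap n r i (p a.succ) j' ∧
              q b.castSucc j' = xh j' := by
            intro j'
            constructor
            · rw [hqgt b.succ (by rw [vsu]; omega) (by rw [vsu]; simpa using b.isLt) j']
              refine psmap_congr r i p ?_ j' (t := a.succ)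
              show (b:ℕ)+1-1 = (a:ℕ)+1
              omega
            · exact hqeq b.castSucc (by rw [vcs]; omega) j'
          refine ⟨r, ?_, fun j' hj' => ?_⟩
          · rw [(key r).1, (key r).2, hdiff r, hSA r, har0, hxh_def]
            simp
            omega
          · rw [(key j').1, (key j').2, hdiff j', hSA j', hxh_def]
            simp [hj']
        · -- step strictly above the inserted point : valid Smap step shifted
          have hb' : (b:ℕ)-1 < N+1 := by have := b.isLt; omega
          obtain ⟨j1, hs1, hs2⟩ := hvalid ⟨(b:ℕ)-1, hb'⟩ (by
            intro hh
            have : (b:ℕ)-1 = (a:ℕ) := congrArg Fin.val hh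
            omega)
          have key : ∀ j' : Fin n, q b.succ j' = Smap n r i (p (Fin.succ ⟨(b:ℕ)-1, hb'⟩)) j' ∧
              q b.castSucc j' = Smap n r i (p (Fin.castSucc ⟨(b:ℕ)-1, hb'⟩)) j' := by
            intro j'
            constructor
            · rw [hqgt b.succ (by rw [vsu]; omega) (by rw [vsu]; simpa using b.isLt) j']
              refine psmap_congr r i p ?_ j'
              show (b:ℕ)+1-1 = (b:ℕ)-1+1
              omega
            · rw [hqgt b.castSucc (by rw [vcs]; omega) (by rw [vcs]; have := b.isLt; omega) j']
              exact psmap_congr r i p rfl j'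
          refine ⟨j1, ?_, fun j' hj' => ?_⟩
          · rw [(key j1).1, (key j1).2]; exact hs1
          · rw [(key j').1, (key j').2]; exact hs2 j' hj'
  have hqlat : IsLatticePath n (N + 2) q
      (fun j => (Function.update k r (k r + 1) j : ℤ) + 1) := ⟨hq0, hqlast, hqstep⟩
  -- uniqueness of the insertion
  have huniq : ∀ (c' : Fin (N+3)) (q' : Fin (N+3) → Fin n → ℤ),
      (∀ b : Fin (N+2), q' (c'.succAbove b) = Smap n r i (p b)) →
      IsLatticePath n (N+2) q' (fun j => (Function.update k r (k r + 1) j : ℤ) + 1) →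
      c' = c ∧ q' = q := by
    intro c' q' hins' hlat'
    obtain ⟨h0'', hl'', hs''⟩ := hlat'
    have hcval' : (c':ℕ) = (a:ℕ)+1 := by
      by_contra hne
      rcases Nat.lt_or_ge (c':ℕ) ((a:ℕ)+1) with hlt | hge
      · -- c' ≤ a : the bad step of Smap ∘ p appears as a step of q'
        have hb1 : (a:ℕ)+1 < N+2 := by have := a.isLt; omega
        obtain ⟨j1, hx1, hx2⟩ := hs'' ⟨(a:ℕ)+1, hb1⟩
        have E1 : ∀ j', q' (Fin.castSucc ⟨(a:ℕ)+1, hb1⟩) j' = Smap n r i (p a.castSucc) j' := by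
          intro j'
          rw [hhigh c' q' hins' _ (show (a:ℕ)+1-1 < N+2 by omega)
            (show (c':ℕ) < (a:ℕ)+1 from hlt)]
          refine psmap_congr r i p ?_ j' (t := a.castSucc)
          show (a:ℕ)+1-1 = (a:ℕ)
          omega
        have E2 : ∀ j', q' (Fin.succ ⟨(a:ℕ)+1, hb1⟩) j' = Smap n r i (p a.succ) j' := by
          intro j'
          rw [hhigh c' q' hins' _ (show (a:ℕ)+1+1-1 < N+2 from hb1)
            (show (c':ℕ) < (a:ℕ)+1+1 by omega)]
          refine psmap_congr r i p ?_ j' (t := a.succ)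
          show (a:ℕ)+1+1-1 = (a:ℕ)+1
          omega
        exact hfail ⟨j1, by rw [← E1 j1, ← E2 j1]; exact hx1,
          fun j' hj' => by rw [← E1 j', ← E2 j']; exact hx2 j' hj'⟩
      · -- c' ≥ a+2
        have hge' : (a:ℕ)+1 < (c':ℕ) := by omega
        have hb2 : (a:ℕ) < N+2 := by have := a.isLt; omega
        obtain ⟨j1, hx1, hx2⟩ := hs'' ⟨(a:ℕ), hb2⟩
        have E1 : ∀ j', q' (Fin.castSucc ⟨(a:ℕ), hb2⟩) j' = Smap n r i (p a.castSucc) j' := by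
          intro j'
          rw [hlow c' q' hins' _ (show (a:ℕ) < N+2 from hb2)
            (show (a:ℕ) < (c':ℕ) by omega)]
          exact psmap_congr r i p rfl j'
        have E2 : ∀ j', q' (Fin.succ ⟨(a:ℕ), hb2⟩) j' = Smap n r i (p a.succ) j' := by
          intro j'
          rw [hlow c' q' hins' _ (show (a:ℕ)+1 < N+2 by have := a.isLt; omega)
            (show (a:ℕ)+1 < (c':ℕ) from hge')]
          exact psmap_congr r i p rfl j'
        exact hfail ⟨j1, by rw [← E1 j1, ← E2 j1]; exact hx1,
          fun j' hj' => by rw [← E1 j', ← E2 j']; exact hx2 j' hj'⟩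
    have hcc : c' = c := Fin.ext (by rw [hcval', hcval])
    refine ⟨hcc, funext fun t => funext fun j => ?_⟩
    rcases lt_trichotomy ((t:ℕ)) ((a:ℕ)+1) with ht | ht | ht
    · have h1 : (t:ℕ) < N+2 := by have := a.isLt; omega
      rw [hlow c' q' hins' t h1 (by omega), hqle t (by omega) h1 j]
    · -- the inserted point is determined
      have hbd : (a:ℕ) < N+2 := by have := a.isLt; omega
      have hbe : (a:ℕ)+1 < N+2 := by have := a.isLt; omega
      obtain ⟨j1, hx1, hx2⟩ := hs'' ⟨(a:ℕ), hbd⟩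
      obtain ⟨j2, hy1, hy2⟩ := hs'' ⟨(a:ℕ)+1, hbe⟩
      have ecd : Fin.succ ⟨(a:ℕ), hbd⟩ = t := Fin.ext (show (a:ℕ)+1 = (t:ℕ) from ht.symm)
      have ece : Fin.castSucc ⟨(a:ℕ)+1, hbe⟩ = t := Fin.ext (show (a:ℕ)+1 = (t:ℕ) from ht.symm)
      rw [ecd] at hx1 hx2
      rw [ece] at hy1 hy2
      have ED : ∀ j', q' (Fin.castSucc ⟨(a:ℕ), hbd⟩) j' = p a.castSucc j' := by
        intro j'
        rw [hlow c' q' hins' _ (show (a:ℕ) < N+2 from hbd) (by show (a:ℕ) < (c':ℕ); omega)]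
        exact Eq.trans (psmap_congr r i p rfl j' (t := a.castSucc)) (hSA j')
      have EE : ∀ j', q' (Fin.succ ⟨(a:ℕ)+1, hbe⟩) j' = Smap n r i (p a.succ) j' := by
        intro j'
        rw [hhigh c' q' hins' _ (show (a:ℕ)+1+1-1 < N+2 from hbe)
          (by show (c':ℕ) < (a:ℕ)+1+1; omega)]
        refine psmap_congr r i p ?_ j' (t := a.succ)
        show (a:ℕ)+1+1-1 = (a:ℕ)+1
        omega
      rw [EE j2] at hy1
      have hv1 : q' t r = p a.castSucc r + (if r = j1 then 1 else 0) := by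
        by_cases hh : r = j1
        · rw [if_pos hh]
          subst hh
          rw [hx1, ED r]
        · rw [if_neg hh, hx2 r hh, ED r]
          ring
      have hv2 : Smap n r i (p a.succ) r = q' t r + (if r = j2 then 1 else 0) := by
        by_cases hh : r = j2
        · rw [if_pos hh]
          subst hh
          exact hy1
        · rw [if_neg hh]
          have h5 := hy2 r hh
          rw [EE r] at h5
          rw [h5]
          ring
      have hDr : Smap n r i (p a.succ) r = p a.castSucc r + 2 := by
        rw [hdiff r, hSA r]
        simp
      have hj1r : r = j1 := by
        by_contra hh
        rw [if_neg hh] at hv1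
        by_cases hh2 : r = j2
        · rw [if_pos hh2] at hv2; omega
        · rw [if_neg hh2] at hv2; omega
      -- determine q' at the inserted position
      rw [hqeq t ht j]
      by_cases hj : j = r
      · subst hj
        rw [hv1, if_pos hj1r, har0, hxh_def]
        simp
      · have hjj1 : j ≠ j1 := fun hh => hj (hh.trans hj1r.symm)
        rw [hx2 j hjj1, ED j, hxh_def]
        simp [hj]
    · have h1 : (t:ℕ)-1 < N+2 := by have := t.isLt; omega
      rw [hhigh c' q' hins' t h1 (by omega), hqgt t (by omega) h1 j]
  -- assemble the three statements
  refine ⟨⟨a, hfail, fun b hb => ?_⟩, ⟨(c, q), ⟨hqins, hqlat⟩, ?_⟩, ?_⟩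
  · by_contra hne
    exact hb (hvalid b hne)
  · rintro ⟨c', q'⟩ ⟨h1, h2⟩
    obtain ⟨e1, e2⟩ := huniq c' q' h1 h2
    exact Prod.ext e1 e2
  · rintro ⟨c', q'⟩ ⟨h1, h2⟩
    obtain ⟨e1, e2⟩ := huniq c' q' h1 h2
    subst e1
    subst e2
    refine ⟨?_, ?_, ?_⟩
    · show ((c:Fin (N+3)):ℕ) ≠ 0
      rw [hcval]
      omega
    · show ((c:Fin (N+3)):ℕ) ≠ N+2
      rw [hcval]
      have := a.isLt
      omega
    · intro d e hd he
      rw [show (((c,q).1 : Fin (N+3)):ℕ) = (a:ℕ)+1 from rfl] at hd he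
      funext j
      show q d.succ j - q d.castSucc j = q e.succ j - q e.castSucc j
      have hds : ∀ j', q d.succ j' = xh j' := fun j' => hqeq d.succ (by rw [vsu]; omega) j'
      have hdc : ∀ j', q d.castSucc j' = p a.castSucc j' := by
        intro j'
        rw [hqle d.castSucc (by rw [vcs]; omega) (by rw [vcs]; exact d.isLt) j']
        refine Eq.trans (psmap_congr r i p ?_ j' (t := a.castSucc)) (hSA j')
        show (d:ℕ) = (a:ℕ)
        omega
      have hec : ∀ j', q e.castSucc j' = xh j' := fun j' => hqeq e.castSucc (by rw [vcs]; omega) j'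
      have hes : ∀ j', q e.succ j' = Smap n r i (p a.succ) j' := by
        intro j'
        rw [hqgt e.succ (by rw [vsu]; omega) (by rw [vsu]; have := e.isLt; omega) j']
        refine psmap_congr r i p ?_ j' (t := a.succ)
        show (e:ℕ)+1-1 = (a:ℕ)+1
        omega
      rw [hds j, hdc j, hec j, hes j, hdiff j, hSA j]
      by_cases hj : j = r
      · subst hj
        rw [har0, hxh_def]
        simp
      · rw [hxh_def]
        simp [hj]
end

section
/- Degeneracy operators on lattice paths strictly increase the number of internal points: if p is a lattice path, then σ^r_i(p) has exactly one more internal point than p. Consequently, a lattice path lies in the image of some degeneracy operator if and only if it has at least one internal point. -/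
/-- Number of internal points of a path: non-extremal points where the
incoming and the outgoing steps have the same direction. -/
def internalCount (n N : ℕ) (p : Fin (N + 1) → Fin n → ℤ) : ℕ :=
  (Finset.univ.filter (fun a : Fin (N + 1) => ∃ d e : Fin N,
      ((d : ℕ) + 1 = (a : ℕ)) ∧ ((e : ℕ) = (a : ℕ)) ∧
      (fun j => p d.succ j - p d.castSucc j) = (fun j => p e.succ j - p e.castSucc j))).card

/-!
Every step of a lattice path adds a unit vector, so the coordinate sum of its `a`-th point is `a`.
Comparing coordinate sums in `q ∘ c.succAbove = S^r_i ∘ p` shows that `S^r_i` moves exactly the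
points of `p` from index `c` on; hence `p` crosses level `i` in direction `r` at step `c - 1`,
and `q` is `p` with that step doubled: the step sequence of `q` is that of `p` composed with the
codegeneracy `predAbove (c - 1)`. Doubling a step creates exactly one new pair of equal
consecutive steps, i.e. one new internal point. Conversely, deleting one of two equal consecutive
steps `e_r` of `q` gives a preimage, with `i` the `r`-th coordinate of the point before them.
-/

open Finset

def pathSteps {G : Type*} [Sub G] {M : ℕ} (p : Fin (M + 1) → G) (a : Fin M) : G :=
  p a.succ - p a.castSucc

def repeatCount {α : Type*} [DecidableEq α] {M : ℕ} (s : Fin (M + 1) → α) : ℕ :=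
  #{b : Fin M | s b.castSucc = s b.succ}

section Repeats

variable {M : ℕ}

lemma Fin.predAbove_succ_succAbove (t : Fin (M + 1)) (b : Fin M) :
    t.predAbove (t.succAbove b).succ = b.succ := by
  rcases lt_or_ge b.castSucc t with h | h
  · rw [Fin.succAbove_of_castSucc_lt _ _ h, Fin.succ_castSucc,
      Fin.predAbove_castSucc_of_le _ _ (Fin.castSucc_lt_iff_succ_le.mp h)]
  · rw [Fin.succAbove_of_le_castSucc _ _ h,
      Fin.predAbove_succ_of_le _ _ (h.trans (Fin.castSucc_le_succ b))]

lemma Fin.predAbove_castSucc_succAbove (t : Fin (M + 1)) (b : Fin M) :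
    t.predAbove (t.succAbove b).castSucc = b.castSucc := by
  rw [← Fin.castSucc_succAbove_castSucc, Fin.predAbove_succAbove]

lemma repeatCount_comp_predAbove {α : Type*} [DecidableEq α] (s : Fin (M + 1) → α)
    (t : Fin (M + 1)) : repeatCount (s ∘ t.predAbove) = repeatCount s + 1 := by
  simp only [repeatCount, card_filter, Fin.sum_univ_succAbove _ t, Function.comp_apply,
    Fin.predAbove_castSucc_self, Fin.predAbove_succ_self, if_true,
    Fin.predAbove_castSucc_succAbove, Fin.predAbove_succ_succAbove]
  exact add_comm _ _

lemma internalCount_eq_repeatCount {n : ℕ} (p : Fin (M + 2) → Fin n → ℤ) :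
    internalCount n (M + 1) p = repeatCount (pathSteps p) := by
  refine (card_bij (fun b _ => b.succ.castSucc) ?_ ?_ ?_).symm
  · simp only [mem_filter, mem_univ, true_and]
    intro b hb
    exact ⟨b.castSucc, b.succ, rfl, rfl, hb⟩
  · intro b₁ _ b₂ _ h
    simpa using h
  · simp only [mem_filter, mem_univ, true_and]
    rintro a ⟨d, e, hd, he, hde⟩
    have hdM : (d : ℕ) < M := by omega
    rw [show e = Fin.succ ⟨d, hdM⟩ from Fin.ext (by simp; omega)] at hde
    exact ⟨⟨d, hdM⟩, hde, Fin.ext (by simp; omega)⟩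

end Repeats

/-- `q` is `p` with its step `t`, equal to `v`, doubled. -/
lemma pathSteps_eq_comp_predAbove {G : Type*} [AddCommGroup G] {M : ℕ} {p : Fin (M + 2) → G}
    {q : Fin (M + 3) → G} {t : Fin (M + 1)} {v : G}
    (hshift : ∀ b, q (t.succ.castSucc.succAbove b) = p b + if t.castSucc < b then v else 0)
    (hc : q t.succ.castSucc = p t.castSucc + v) (hv : p t.succ = p t.castSucc + v) :
    pathSteps q = pathSteps p ∘ t.predAbove := by
  have hsucc : ∀ d, d ≠ t.castSucc →
      q d.succ = p (t.predAbove d).succ + if t ≤ t.predAbove d then v else 0 := by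
    intro d hd
    have hd' : d.succ = t.succ.castSucc.succAbove (t.predAbove d).succ := by
      rw [← Fin.succ_castSucc, Fin.succ_succAbove_succ, Fin.succAbove_predAbove hd]
    rw [hd', hshift]
    simp only [Fin.castSucc_lt_succ_iff]
  have hcast : ∀ d, d ≠ t.succ →
      q d.castSucc = p (t.predAbove d).castSucc + if t < t.predAbove d then v else 0 := by
    intro d hd
    have hd' : d.castSucc = t.succ.castSucc.succAbove (t.predAbove d).castSucc := by
      rw [Fin.castSucc_succAbove_castSucc, Fin.succ_succAbove_predAbove hd]
    rw [hd', hshift]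
    simp only [Fin.castSucc_lt_castSucc_iff]
  funext d
  simp only [pathSteps, Function.comp_apply]
  by_cases hd₁ : d = t.castSucc
  · subst hd₁
    rw [Fin.succ_castSucc, hc, hcast _ Fin.castSucc_lt_succ.ne, Fin.predAbove_castSucc_self,
      if_neg (lt_irrefl t), hv]
    abel
  by_cases hd₂ : d = t.succ
  · subst hd₂
    rw [hc, hsucc _ Fin.castSucc_lt_succ.ne', Fin.predAbove_succ_self, if_pos le_rfl]
    abel
  have hne : t.predAbove d ≠ t := by
    intro h
    apply hd₂
    rw [← Fin.succAbove_predAbove hd₁, h, Fin.succAbove_castSucc_self]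
  rw [hsucc d hd₁, hcast d hd₂]
  by_cases hlt : t < t.predAbove d
  · rw [if_pos hlt.le, if_pos hlt]; abel
  · rw [if_neg hlt, if_neg fun h => hlt (lt_of_le_of_ne h (Ne.symm hne))]; abel

lemma eq_add_single_one_iff {ι : Type*} [DecidableEq ι] {x y : ι → ℤ} {j : ι} :
    y = x + Pi.single j 1 ↔ y j = x j + 1 ∧ ∀ j' ≠ j, y j' = x j' := by
  refine ⟨fun h => ⟨by simp [h], fun j' hj' => by simp [h, hj']⟩, fun ⟨hj, hne⟩ => ?_⟩
  funext j'
  by_cases h : j' = j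
  · subst h; simp [hj]
  · simp [hne j' h, h]

section LatticePath

variable {n M : ℕ} {p : Fin (M + 1) → Fin n → ℤ} {tgt : Fin n → ℤ}

lemma isLatticePath_iff :
    IsLatticePath n M p tgt ↔
      p 0 = 0 ∧ p (Fin.last M) = tgt ∧ ∀ a, ∃ j, pathSteps p a = Pi.single j 1 := by
  rw [IsLatticePath, funext_iff, funext_iff]
  simp only [pathSteps, sub_eq_iff_eq_add', eq_add_single_one_iff, Pi.zero_apply]

namespace IsLatticePath

lemma pathSteps_eq (hp : IsLatticePath n M p tgt) (a : Fin M) :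
    ∃ j, pathSteps p a = Pi.single j 1 :=
  (isLatticePath_iff.mp hp).2.2 a

lemma succ_eq (hp : IsLatticePath n M p tgt) (a : Fin M) :
    ∃ j, p a.succ = p a.castSucc + Pi.single j 1 := by
  simpa only [pathSteps, sub_eq_iff_eq_add'] using hp.pathSteps_eq a

lemma sum_apply (hp : IsLatticePath n M p tgt) (a : Fin (M + 1)) : ∑ j, p a j = a := by
  induction a using Fin.induction with
  | zero => simp [hp.1]
  | succ a ih =>
    obtain ⟨j, hj⟩ := hp.succ_eq a
    simp [hj, sum_add_distrib, ih]

lemma monotone (hp : IsLatticePath n M p tgt) : Monotone p := by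
  refine Fin.monotone_iff_le_succ.mpr fun a => ?_
  obtain ⟨j, hj⟩ := hp.succ_eq a
  rw [hj]
  exact le_add_of_nonneg_right (Pi.single_nonneg.mpr zero_le_one)

end IsLatticePath

end LatticePath

lemma Smap_eq {n : ℕ} (r : Fin n) (i : ℕ) (x : Fin n → ℤ) :
    Smap n r i x = x + if (i : ℤ) < x r then Pi.single r 1 else 0 := by
  funext j
  by_cases hj : j = r
  · subst hj; split_ifs <;> simp [Smap, *]
  · split_ifs <;> simp [Smap, hj]

lemma sum_Smap {n : ℕ} (r : Fin n) (i : ℕ) (x : Fin n → ℤ) :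
    ∑ j, Smap n r i x j = ∑ j, x j + if (i : ℤ) < x r then 1 else 0 := by
  rw [Smap_eq]
  split_ifs <;> simp [sum_add_distrib]

lemma eq_of_single_one_add_single_one_eq {ι : Type*} [DecidableEq ι] {a b r : ι}
    (h : (Pi.single a 1 + Pi.single b 1 : ι → ℤ) = Pi.single r 1 + Pi.single r 1) : a = r := by
  by_contra har
  have ha := congrFun h a
  simp only [Pi.add_apply, Pi.single_eq_same, Pi.single_eq_of_ne har, add_zero] at ha
  rw [Pi.single_apply] at ha
  split_ifs at ha <;> omega

section Degeneracy

variable {n : ℕ} {r : Fin n} {i : ℕ}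

lemma IsLatticePath.lt_apply_iff_of_Smap {M : ℕ} {p : Fin (M + 1) → Fin n → ℤ}
    {q : Fin (M + 2) → Fin n → ℤ} {tp tq : Fin n → ℤ} {c : Fin (M + 2)}
    (hp : IsLatticePath n M p tp) (hq : IsLatticePath n (M + 1) q tq)
    (hqp : ∀ b, q (c.succAbove b) = Smap n r i (p b)) (b : Fin (M + 1)) :
    (i : ℤ) < p b r ↔ c ≤ b.castSucc := by
  have hsum := congrArg (fun x => ∑ j, x j) (hqp b)
  simp only [hq.sum_apply, sum_Smap, hp.sum_apply] at hsum
  rcases le_or_gt c b.castSucc with h | h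
  · rw [Fin.succAbove_of_le_castSucc _ _ h] at hsum
    simp only [Fin.val_succ, Nat.cast_add, Nat.cast_one, add_right_inj] at hsum
    simp only [h, iff_true]
    split_ifs at hsum with hi <;> omega
  · rw [Fin.succAbove_of_castSucc_lt _ _ h] at hsum
    simp only [Fin.val_castSucc, left_eq_add] at hsum
    simp only [not_le.mpr h, iff_false]
    split_ifs at hsum with hi <;> omega

theorem internalCount_eq_add_one_of_Smap {N : ℕ} {p : Fin (N + 2) → Fin n → ℤ}
    {q : Fin (N + 3) → Fin n → ℤ} {tp tq : Fin n → ℤ} {c : Fin (N + 3)}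
    (hp : IsLatticePath n (N + 1) p tp) (hq : IsLatticePath n (N + 2) q tq)
    (hlast : (i : ℤ) < p (Fin.last _) r) (hqp : ∀ b, q (c.succAbove b) = Smap n r i (p b)) :
    internalCount n (N + 2) q = internalCount n (N + 1) p + 1 := by
  have key := hp.lt_apply_iff_of_Smap hq hqp
  obtain ⟨t, rfl⟩ : ∃ t : Fin (N + 1), t.succ.castSucc = c := by
    have h0 : c ≠ 0 := by
      rintro rfl
      have := (key 0).mpr (Fin.zero_le _)
      simp only [hp.1] at this
      omega
    obtain ⟨c', rfl⟩ := Fin.exists_castSucc_eq.mpr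
      ((key _).mp hlast |>.trans_lt (Fin.castSucc_lt_last _)).ne
    obtain ⟨t, rfl⟩ := Fin.exists_succ_eq_of_ne_zero (x := c') (by rintro rfl; exact h0 rfl)
    exact ⟨t, rfl⟩
  have hshift : ∀ b, q (t.succ.castSucc.succAbove b) =
      p b + if t.castSucc < b then Pi.single r 1 else 0 := by
    intro b
    rw [hqp, Smap_eq]
    simp only [key, Fin.castSucc_le_castSucc_iff, Fin.castSucc_lt_iff_succ_le]
  have hv : p t.succ = p t.castSucc + Pi.single r 1 := by
    obtain ⟨j, hj⟩ := hp.succ_eq t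
    have hlo : ¬ (i : ℤ) < p t.castSucc r := by simp [key]
    have hhi : (i : ℤ) < p t.succ r := (key _).mpr le_rfl
    obtain rfl : j = r := by
      by_contra h
      rw [hj, Pi.add_apply, Pi.single_eq_of_ne (Ne.symm h), add_zero] at hhi
      exact hlo hhi
    exact hj
  have hc : q t.succ.castSucc = p t.castSucc + Pi.single r 1 := by
    obtain ⟨j₁, hj₁⟩ := hq.succ_eq t.castSucc
    obtain ⟨j₂, hj₂⟩ := hq.succ_eq t.succ
    have hlow : q t.castSucc.castSucc = p t.castSucc := by
      simpa [Fin.succAbove_of_castSucc_lt] using hshift t.castSucc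
    have hhigh : q t.succ.succ = p t.succ + Pi.single r 1 := by
      simpa [Fin.succAbove_of_le_castSucc] using hshift t.succ
    rw [Fin.succ_castSucc, hlow] at hj₁
    rw [hhigh, hv, hj₁, add_assoc, add_assoc, add_right_inj] at hj₂
    rw [hj₁, eq_of_single_one_add_single_one_eq hj₂.symm]
  rw [internalCount_eq_repeatCount, internalCount_eq_repeatCount,
    pathSteps_eq_comp_predAbove hshift hc hv, repeatCount_comp_predAbove]

end Degeneracy

lemma IsLatticePath.of_pathSteps_eq_comp_predAbove {n M : ℕ} {p : Fin (M + 2) → Fin n → ℤ}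
    {q : Fin (M + 3) → Fin n → ℤ} {tq : Fin n → ℤ} {t : Fin (M + 1)}
    (hq : IsLatticePath n (M + 2) q tq) (hpq : pathSteps q = pathSteps p ∘ t.predAbove)
    (hp0 : p 0 = 0) : IsLatticePath n (M + 1) p (p (Fin.last _)) := by
  refine isLatticePath_iff.mpr ⟨hp0, rfl, fun b => ?_⟩
  rw [← Fin.predAbove_succAbove t b, ← Function.comp_apply (f := pathSteps p), ← hpq]
  exact hq.pathSteps_eq _

lemma lt_apply_iff_castSucc_lt {n M : ℕ} {p : Fin (M + 2) → Fin n → ℤ} (hmono : Monotone p)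
    {t : Fin (M + 1)} {r : Fin n} (hv : p t.succ = p t.castSucc + Pi.single r 1)
    (b : Fin (M + 2)) : p t.castSucc r < p b r ↔ t.castSucc < b := by
  refine ⟨fun hb => ?_, fun hb => ?_⟩
  · by_contra hb'
    exact (hmono (not_lt.mp hb') r).not_gt hb
  · have := hmono (Fin.castSucc_lt_iff_succ_le.mp hb) r
    rw [hv, Pi.add_apply, Pi.single_eq_same] at this
    exact (lt_add_one _).trans_le this

lemma exists_Smap_of_pathSteps_eq {n N : ℕ} {q : Fin (N + 3) → Fin n → ℤ}
    {tq : Fin n → ℤ} (hq : IsLatticePath n (N + 2) q tq) {t : Fin (N + 1)} {r : Fin n}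
    (hr : pathSteps q t.castSucc = Pi.single r 1)
    (ht : pathSteps q t.castSucc = pathSteps q t.succ) :
    ∃ (i : ℕ) (p : Fin (N + 2) → Fin n → ℤ),
      IsLatticePath n (N + 1) p (tq - Pi.single r 1) ∧ (i : ℤ) < p (Fin.last _) r ∧
      ∀ b, q (t.succ.castSucc.succAbove b) = Smap n r i (p b) := by
  set c : Fin (N + 3) := t.succ.castSucc
  set p : Fin (N + 2) → Fin n → ℤ :=
    fun b => q (c.succAbove b) - if t.castSucc < b then Pi.single r 1 else 0 with hp_def
  have hshift : ∀ b, q (c.succAbove b) = p b + if t.castSucc < b then Pi.single r 1 else 0 :=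
    fun b => (sub_add_cancel _ _).symm
  have hc : q c = p t.castSucc + Pi.single r 1 := by
    have hlow : p t.castSucc = q t.castSucc.castSucc := by
      simp [hp_def, c, Fin.succAbove_of_castSucc_lt]
    rw [hlow, ← hr, pathSteps, Fin.succ_castSucc, add_sub_cancel]
  have hv : p t.succ = p t.castSucc + Pi.single r 1 := by
    have hhigh : q t.succ.succ = q c + Pi.single r 1 := by
      rw [← hr, ht, pathSteps, add_sub_cancel]
    rw [← hc]
    simp [hp_def, c, Fin.succAbove_of_le_castSucc, hhigh]
  have hq' := isLatticePath_iff.mp hq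
  have hp := hq.of_pathSteps_eq_comp_predAbove (pathSteps_eq_comp_predAbove hshift hc hv)
    (by simp [hp_def, c, Fin.succAbove_ne_zero_zero, hq'.1])
  have hlast : p (Fin.last _) = tq - Pi.single r 1 := by
    simp [hp_def, c, Fin.succAbove_ne_last_last, Fin.castSucc_lt_last, hq'.2.1]
  have hnonneg : 0 ≤ p t.castSucc r := by
    simpa [hp.1] using hp.monotone (Fin.zero_le t.castSucc) r
  have hcross := lt_apply_iff_castSucc_lt hp.monotone hv
  refine ⟨(p t.castSucc r).toNat, p, hlast ▸ hp, ?_, fun b => ?_⟩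
  · rw [Int.toNat_of_nonneg hnonneg, hcross]
    exact Fin.castSucc_lt_last t
  · rw [hshift, Smap_eq, Int.toNat_of_nonneg hnonneg]
    simp only [hcross]

theorem exists_Smap_of_one_le_internalCount {n N : ℕ} {k : Fin n → ℕ}
    {q : Fin (N + 3) → Fin n → ℤ} (hq : IsLatticePath n (N + 2) q (fun j => (k j : ℤ) + 1))
    (h : 1 ≤ internalCount n (N + 2) q) :
    ∃ (r : Fin n) (i : ℕ) (k' : Fin n → ℕ) (p : Fin (N + 2) → Fin n → ℤ)
      (c : Fin (N + 3)), i ≤ k' r ∧ k = Function.update k' r (k' r + 1) ∧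
      IsLatticePath n (N + 1) p (fun j => (k' j : ℤ) + 1) ∧
      ∀ b : Fin (N + 2), q (c.succAbove b) = Smap n r i (p b) := by
  rw [internalCount_eq_repeatCount, repeatCount, Nat.one_le_iff_ne_zero, Ne, card_eq_zero,
    filter_eq_empty_iff] at h
  push Not at h
  obtain ⟨t, -, ht⟩ := h
  obtain ⟨r, hr⟩ := hq.pathSteps_eq t.castSucc
  obtain ⟨i, p, hp, hi, hqp⟩ := exists_Smap_of_pathSteps_eq hq hr ht
  have hkr := hp.2.1 r
  simp only [Pi.sub_apply, Pi.single_eq_same] at hkr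
  refine ⟨r, i, Function.update k r (k r - 1), p, _, ?_, ?_, ?_, hqp⟩
  · simp only [Function.update_self]
    omega
  · ext j
    by_cases hj : j = r
    · subst hj; simp only [Function.update_self]; omega
    · simp [hj]
  · convert hp using 1
    ext j
    by_cases hj : j = r
    · subst hj; simp only [Function.update_self, Pi.sub_apply, Pi.single_eq_same]; omega
    · simp [hj]

/-- Degeneracies strictly increase the number of internal points by exactly one,
and a lattice path is in the image of a degeneracy operator if and only if it
has at least one internal point. -/
theorem stmt10 (n : ℕ) :
    (∀ (N : ℕ) (k : Fin n → ℕ) (r : Fin n) (i : ℕ), i ≤ k r →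
      ∀ (p : Fin (N + 2) → Fin n → ℤ),
        IsLatticePath n (N + 1) p (fun j => (k j : ℤ) + 1) →
      ∀ (c : Fin (N + 3)) (q : Fin (N + 3) → Fin n → ℤ),
        (∀ b : Fin (N + 2), q (c.succAbove b) = Smap n r i (p b)) →
        IsLatticePath n (N + 2) q (fun j => (Function.update k r (k r + 1) j : ℤ) + 1) →
        internalCount n (N + 2) q = internalCount n (N + 1) p + 1) ∧
    (∀ (N : ℕ) (k : Fin n → ℕ) (q : Fin (N + 3) → Fin n → ℤ),
      IsLatticePath n (N + 2) q (fun j => (k j : ℤ) + 1) →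
      (1 ≤ internalCount n (N + 2) q ↔
        ∃ (r : Fin n) (i : ℕ) (k' : Fin n → ℕ) (p : Fin (N + 2) → Fin n → ℤ)
          (c : Fin (N + 3)),
          i ≤ k' r ∧ k = Function.update k' r (k' r + 1) ∧
          IsLatticePath n (N + 1) p (fun j => (k' j : ℤ) + 1) ∧
          ∀ b : Fin (N + 2), q (c.succAbove b) = Smap n r i (p b))) := by
  refine ⟨fun N k r i hik p hp c q hqp hq => ?_,
    fun N k q hq => ⟨exists_Smap_of_one_le_internalCount hq, ?_⟩⟩
  · exact internalCount_eq_add_one_of_Smap hp hq (by simp only [hp.2.1 r]; omega) hqp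
  · rintro ⟨r, i, k', p, c, hik, -, hp, hqp⟩
    rw [internalCount_eq_add_one_of_Smap hp hq (by simp only [hp.2.1 r]; omega) hqp]
    omega
end

section
/- A simplicial face operator applied to a lattice path with no internal points either decreases the number of angles by exactly 1 or by exactly 2, and it decreases it by 2 precisely when it creates an internal point in the resulting path. -/
/-- Number of angles: non-extremal points where the direction changes. -/
def anglesCount (n N : ℕ) (p : Fin (N + 1) → Fin n → ℤ) : ℕ :=
  (Finset.univ.filter (fun a : Fin (N + 1) => ∃ d e : Fin N,
      ((d : ℕ) + 1 = (a : ℕ)) ∧ ((e : ℕ) = (a : ℕ)) ∧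
      (fun j => p d.succ j - p d.castSucc j) ≠ (fun j => p e.succ j - p e.castSucc j))).card

/-! ### Auxiliary machinery -/

/-- The `c`-th step of a path, as a function of a natural number index. -/
def stp (n M : ℕ) (p : Fin (M + 1) → Fin n → ℤ) (c : ℕ) : Fin n → ℤ :=
  fun j => p ⟨min (c + 1) M, by omega⟩ j - p ⟨min c M, by omega⟩ j

lemma stp_eq (n M : ℕ) (p : Fin (M + 1) → Fin n → ℤ) (c : ℕ) (h : c < M) :
    stp n M p c = fun j => p ⟨c + 1, by omega⟩ j - p ⟨c, by omega⟩ j := by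
  funext j
  have e1 : (⟨min (c + 1) M, by omega⟩ : Fin (M + 1)) = ⟨c + 1, by omega⟩ := by
    apply Fin.ext; simp; omega
  have e2 : (⟨min c M, by omega⟩ : Fin (M + 1)) = ⟨c, by omega⟩ := by
    apply Fin.ext; simp; omega
  simp only [stp]
  rw [e1, e2]

lemma stp_step (n M : ℕ) (p : Fin (M + 1) → Fin n → ℤ) (d : Fin M) :
    (fun j => p d.succ j - p d.castSucc j) = stp n M p d.val := by
  rw [stp_eq n M p d.val d.isLt]
  rfl

lemma cond_iff (n M : ℕ) (p : Fin (M + 1) → Fin n → ℤ)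
    (R : (Fin n → ℤ) → (Fin n → ℤ) → Prop) (a : Fin (M + 1)) :
    (∃ d e : Fin M, ((d : ℕ) + 1 = (a : ℕ)) ∧ ((e : ℕ) = (a : ℕ)) ∧
      R (fun j => p d.succ j - p d.castSucc j) (fun j => p e.succ j - p e.castSucc j)) ↔
    (1 ≤ (a : ℕ) ∧ (a : ℕ) < M ∧ R (stp n M p ((a : ℕ) - 1)) (stp n M p (a : ℕ))) := by
  constructor
  · rintro ⟨d, e, hd, he, hR⟩
    refine ⟨by omega, by omega, ?_⟩
    simp only [stp_step] at hR
    rwa [show (d : ℕ) = (a : ℕ) - 1 by omega, he] at hR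
  · rintro ⟨h1, h2, hR⟩
    refine ⟨⟨(a : ℕ) - 1, by omega⟩, ⟨(a : ℕ), h2⟩, by simp; omega, rfl, ?_⟩
    simp only [stp_step]
    exact hR

lemma cond_ne_iff (n M : ℕ) (p : Fin (M + 1) → Fin n → ℤ) (a : Fin (M + 1)) :
    (∃ d e : Fin M, ((d : ℕ) + 1 = (a : ℕ)) ∧ ((e : ℕ) = (a : ℕ)) ∧
      (fun j => p d.succ j - p d.castSucc j) ≠ (fun j => p e.succ j - p e.castSucc j)) ↔
    (1 ≤ (a : ℕ) ∧ (a : ℕ) < M ∧ stp n M p ((a : ℕ) - 1) ≠ stp n M p (a : ℕ)) :=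
  cond_iff n M p (fun u v => u ≠ v) a

lemma cond_eq_iff (n M : ℕ) (p : Fin (M + 1) → Fin n → ℤ) (a : Fin (M + 1)) :
    (∃ d e : Fin M, ((d : ℕ) + 1 = (a : ℕ)) ∧ ((e : ℕ) = (a : ℕ)) ∧
      (fun j => p d.succ j - p d.castSucc j) = (fun j => p e.succ j - p e.castSucc j)) ↔
    (1 ≤ (a : ℕ) ∧ (a : ℕ) < M ∧ stp n M p ((a : ℕ) - 1) = stp n M p (a : ℕ)) :=
  cond_iff n M p (fun u v => u = v) a

lemma count_add (n M : ℕ) (p : Fin (M + 1) → Fin n → ℤ) :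
    anglesCount n M p + internalCount n M p = M - 1 := by
  classical
  unfold anglesCount internalCount
  rw [← Finset.card_union_of_disjoint (by
    rw [Finset.disjoint_left]
    intro a ha hb
    rw [Finset.mem_filter, cond_ne_iff] at ha
    rw [Finset.mem_filter, cond_eq_iff] at hb
    exact ha.2.2.2 hb.2.2.2)]
  rw [← Finset.filter_or]
  have hre : (Finset.univ.filter (fun a : Fin (M + 1) =>
      (∃ d e : Fin M, ((d : ℕ) + 1 = (a : ℕ)) ∧ ((e : ℕ) = (a : ℕ)) ∧
        (fun j => p d.succ j - p d.castSucc j) ≠ (fun j => p e.succ j - p e.castSucc j)) ∨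
      (∃ d e : Fin M, ((d : ℕ) + 1 = (a : ℕ)) ∧ ((e : ℕ) = (a : ℕ)) ∧
        (fun j => p d.succ j - p d.castSucc j) = (fun j => p e.succ j - p e.castSucc j)))) =
      Finset.univ.filter (fun a : Fin (M + 1) => 1 ≤ (a : ℕ) ∧ (a : ℕ) < M) := by
    apply Finset.filter_congr
    intro a _
    rw [cond_ne_iff, cond_eq_iff]
    tauto
  rw [hre]
  rw [← Finset.card_image_of_injective _ Fin.val_injective]
  have himg : ((Finset.univ.filter (fun a : Fin (M + 1) =>
      1 ≤ (a : ℕ) ∧ (a : ℕ) < M)).image Fin.val) = Finset.Ico 1 M := by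
    ext x
    simp only [Finset.mem_image, Finset.mem_filter, Finset.mem_univ, true_and, Finset.mem_Ico]
    constructor
    · rintro ⟨b, ⟨h1, h2⟩, rfl⟩; exact ⟨h1, h2⟩
    · rintro ⟨h1, h2⟩; exact ⟨⟨x, by omega⟩, ⟨h1, h2⟩, rfl⟩
  rw [himg, Nat.card_Ico]

lemma dmap_diff (n : ℕ) (r : Fin n) (i : ℕ) (x y : Fin n → ℤ) (j : Fin n)
    (h1 : y j = x j + 1) (h2 : ∀ j', j' ≠ j → y j' = x j') :
    (∀ j', Dmap n r i y j' - Dmap n r i x j' = y j' - x j') ∨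
    (∀ j', Dmap n r i y j' = Dmap n r i x j') := by
  have key : ∀ (z : Fin n → ℤ) j', Dmap n r i z j' =
      if j' = r ∧ (i : ℤ) < z r then z j' - 1 else z j' := fun _ _ => rfl
  by_cases hcol : j = r ∧ x r = (i : ℤ)
  · right
    obtain ⟨hjr, hxi⟩ := hcol
    subst hjr
    intro j'
    rw [key, key]
    by_cases hj' : j' = j
    · subst hj'
      rw [if_pos ⟨rfl, by omega⟩, if_neg (by rintro ⟨-, h⟩; omega)]
      omega
    · rw [if_neg (fun h => hj' h.1), if_neg (fun h => hj' h.1)]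
      exact h2 j' hj'
  · left
    intro j'
    rw [key, key]
    by_cases hj' : j' = r
    · subst hj'
      by_cases hjr : j = j'
      · subst hjr
        have hxi : x j ≠ (i : ℤ) := fun h => hcol ⟨rfl, h⟩
        by_cases hlt : (i : ℤ) < x j
        · rw [if_pos ⟨rfl, by omega⟩, if_pos ⟨rfl, hlt⟩]; ring
        · rw [if_neg (by rintro ⟨-, h⟩; omega), if_neg (fun h => hlt h.2)]
      · have hyr : y j' = x j' := h2 j' (fun h => hjr h.symm)
        by_cases hlt : (i : ℤ) < x j'
        · rw [if_pos ⟨rfl, by omega⟩, if_pos ⟨rfl, hlt⟩]; ring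
        · rw [if_neg (by rintro ⟨-, h⟩; omega), if_neg (fun h => hlt h.2)]
    · rw [if_neg (fun h => hj' h.1), if_neg (fun h => hj' h.1)]

lemma unit_sum (n : ℕ) (v0 v1 w : Fin n → ℤ)
    (hv0 : ∃ j, v0 j = 1 ∧ ∀ j', j' ≠ j → v0 j' = 0)
    (hv1 : ∃ j, v1 j = 1 ∧ ∀ j', j' ≠ j → v1 j' = 0)
    (hw : ∃ j, w j = 1 ∧ ∀ j', j' ≠ j → w j' = 0)
    (hsum : ∀ j, w j = v0 j + v1 j) : False := by
  obtain ⟨j0, h00, h01⟩ := hv0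
  obtain ⟨j1, h10, h11⟩ := hv1
  obtain ⟨jw, hw0, hw1⟩ := hw
  by_cases hj : j0 = j1
  · subst hj
    have hs := hsum j0
    by_cases h : j0 = jw
    · subst h; omega
    · have := hw1 j0 h; omega
  · have hs0 := hsum j0
    have hs1 := hsum j1
    have e1 := h11 j0 hj
    have e2 := h01 j1 (Ne.symm hj)
    by_cases a0 : j0 = jw
    · subst a0
      have := hw1 j1 (Ne.symm hj)
      omega
    · have := hw1 j0 a0
      omega

lemma step_mid (n N c : ℕ) (r : Fin n) (i : ℕ)
    (p : Fin (N + 2) → Fin n → ℤ) (q : Fin (N + 1) → Fin n → ℤ)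
    (hc : c + 1 < N + 1)
    (hB : c < N + 2) (hM : c + 1 < N + 2) (hA : c + 2 < N + 2)
    (j0 j1 : Fin n)
    (h01 : p ⟨c + 1, hM⟩ j0 = p ⟨c, hB⟩ j0 + 1)
    (h02 : ∀ j', j' ≠ j0 → p ⟨c + 1, hM⟩ j' = p ⟨c, hB⟩ j')
    (h11 : p ⟨c + 2, hA⟩ j1 = p ⟨c + 1, hM⟩ j1 + 1)
    (h12 : ∀ j', j' ≠ j1 → p ⟨c + 2, hA⟩ j' = p ⟨c + 1, hM⟩ j')
    (hx : q ⟨c, by omega⟩ = Dmap n r i (p ⟨c, hB⟩))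
    (hy : q ⟨c + 1, by omega⟩ = Dmap n r i (p ⟨c + 2, hA⟩))
    (hpunit0 : ∃ j, stp n (N + 1) p c j = 1 ∧ ∀ j', j' ≠ j → stp n (N + 1) p c j' = 0)
    (hpunit1 : ∃ j, stp n (N + 1) p (c + 1) j = 1 ∧
      ∀ j', j' ≠ j → stp n (N + 1) p (c + 1) j' = 0)
    (hqunit : ∃ j, stp n N q c j = 1 ∧ ∀ j', j' ≠ j → stp n N q c j' = 0) :
    stp n N q c = stp n (N + 1) p c ∨ stp n N q c = stp n (N + 1) p (c + 1) := by
  have hsp0 : stp n (N + 1) p c = fun j' => p ⟨c + 1, hM⟩ j' - p ⟨c, hB⟩ j' :=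
    stp_eq n (N + 1) p c (by omega)
  have hsp1 : stp n (N + 1) p (c + 1) = fun j' => p ⟨c + 2, hA⟩ j' - p ⟨c + 1, hM⟩ j' :=
    stp_eq n (N + 1) p (c + 1) (by omega)
  have hsq : stp n N q c = fun j' => q ⟨c + 1, by omega⟩ j' - q ⟨c, by omega⟩ j' :=
    stp_eq n N q c (by omega)
  rcases dmap_diff n r i (p ⟨c, hB⟩) (p ⟨c + 1, hM⟩) j0 h01 h02 with d0 | z0 <;>
    rcases dmap_diff n r i (p ⟨c + 1, hM⟩) (p ⟨c + 2, hA⟩) j1 h11 h12 with d1 | z1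
  · exfalso
    apply unit_sum n (stp n (N + 1) p c) (stp n (N + 1) p (c + 1)) (stp n N q c)
      hpunit0 hpunit1 hqunit
    intro j'
    simp only [hsq, hsp0, hsp1]
    show q ⟨c + 1, by omega⟩ j' - q ⟨c, by omega⟩ j' =
      (p ⟨c + 1, hM⟩ j' - p ⟨c, hB⟩ j') + (p ⟨c + 2, hA⟩ j' - p ⟨c + 1, hM⟩ j')
    rw [hx, hy]
    have e0 := d0 j'
    have e1 := d1 j'
    omega
  · left
    simp only [hsq, hsp0]
    funext j'
    show q ⟨c + 1, by omega⟩ j' - q ⟨c, by omega⟩ j' = p ⟨c + 1, hM⟩ j' - p ⟨c, hB⟩ j'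
    rw [hx, hy]
    have e0 := d0 j'
    have e1 := z1 j'
    omega
  · right
    simp only [hsq, hsp1]
    funext j'
    show q ⟨c + 1, by omega⟩ j' - q ⟨c, by omega⟩ j' = p ⟨c + 2, hA⟩ j' - p ⟨c + 1, hM⟩ j'
    rw [hx, hy]
    have e0 := z0 j'
    have e1 := d1 j'
    omega
  · exfalso
    obtain ⟨jq, hq1, hq2⟩ := hqunit
    have hz0 : stp n N q c jq = 0 := by
      simp only [hsq]
      show q ⟨c + 1, by omega⟩ jq - q ⟨c, by omega⟩ jq = 0
      rw [hx, hy]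
      have e0 := z0 jq
      have e1 := z1 jq
      omega
    omega

/-- A simplicial face operator applied to a lattice path with no internal points
decreases the number of angles by exactly `1` or exactly `2`, and it decreases
it by `2` precisely when it creates an internal point. -/
theorem stmt11 (n N : ℕ) (k : Fin n → ℕ) (r : Fin n) (i : ℕ)
    (hkr : 1 ≤ k r) (hi : i ≤ k r)
    (p : Fin (N + 2) → Fin n → ℤ)
    (hp : IsLatticePath n (N + 1) p (fun j => (k j : ℤ) + 1))
    (hnoint : internalCount n (N + 1) p = 0)
    (a : Fin (N + 2)) (q : Fin (N + 1) → Fin n → ℤ)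
    (hqdef : ∀ b, q b = Dmap n r i (p (a.succAbove b)))
    (hq : IsLatticePath n N q (fun j => (Function.update k r (k r - 1) j : ℤ) + 1)) :
    (anglesCount n (N + 1) p = anglesCount n N q + 1 ∨
      anglesCount n (N + 1) p = anglesCount n N q + 2) ∧
    (anglesCount n (N + 1) p = anglesCount n N q + 2 ↔ 1 ≤ internalCount n N q) := by
  classical
  rcases Nat.eq_zero_or_pos N with hN0 | hN
  · exfalso
    subst hN0
    have h0 := hq.1 r
    have h1 := hq.2.1 r
    have he : (Fin.last 0) = (0 : Fin 1) := rfl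
    simp only [he, h0, Function.update_self] at h1
    omega
  obtain ⟨hp0, hpN, hpstep⟩ := hp
  obtain ⟨hq0, hqN, hqstep⟩ := hq
  -- unit steps in explicit form
  have hpu : ∀ c : ℕ, ∀ _ : c < N + 1, ∃ j, p ⟨c + 1, by omega⟩ j = p ⟨c, by omega⟩ j + 1 ∧
      ∀ j', j' ≠ j → p ⟨c + 1, by omega⟩ j' = p ⟨c, by omega⟩ j' := by
    intro c h
    exact hpstep ⟨c, h⟩
  have hqu : ∀ c : ℕ, ∀ _ : c < N, ∃ j, q ⟨c + 1, by omega⟩ j = q ⟨c, by omega⟩ j + 1 ∧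
      ∀ j', j' ≠ j → q ⟨c + 1, by omega⟩ j' = q ⟨c, by omega⟩ j' := by
    intro c h
    exact hqstep ⟨c, h⟩
  have hpunit : ∀ c : ℕ, c < N + 1 →
      ∃ j, stp n (N + 1) p c j = 1 ∧ ∀ j', j' ≠ j → stp n (N + 1) p c j' = 0 := by
    intro c h
    obtain ⟨j, h1, h2⟩ := hpu c h
    rw [stp_eq n (N + 1) p c h]
    exact ⟨j, by simp only []; omega, fun j' hj' => by have := h2 j' hj'; simp only []; omega⟩
  have hqunit : ∀ c : ℕ, c < N →
      ∃ j, stp n N q c j = 1 ∧ ∀ j', j' ≠ j → stp n N q c j' = 0 := by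
    intro c h
    obtain ⟨j, h1, h2⟩ := hqu c h
    rw [stp_eq n N q c h]
    exact ⟨j, by simp only []; omega, fun j' hj' => by have := h2 j' hj'; simp only []; omega⟩
  -- p has no internal points
  have hpangle : ∀ c : ℕ, c + 1 < N + 1 → stp n (N + 1) p c ≠ stp n (N + 1) p (c + 1) := by
    intro c hc heq
    unfold internalCount at hnoint
    have hfe := Finset.card_eq_zero.mp hnoint
    have hmem : (⟨c + 1, by omega⟩ : Fin (N + 2)) ∈
        Finset.univ.filter (fun a : Fin (N + 2) => ∃ d e : Fin (N + 1),
          ((d : ℕ) + 1 = (a : ℕ)) ∧ ((e : ℕ) = (a : ℕ)) ∧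
          (fun j => p d.succ j - p d.castSucc j) = (fun j => p e.succ j - p e.castSucc j)) := by
      rw [Finset.mem_filter]
      refine ⟨Finset.mem_univ _, (cond_eq_iff n (N + 1) p ⟨c + 1, by omega⟩).mpr ⟨?_, ?_, ?_⟩⟩
      · show 1 ≤ c + 1; omega
      · show c + 1 < N + 1; omega
      · show stp n (N + 1) p (c + 1 - 1) = stp n (N + 1) p (c + 1)
        exact heq
    rw [hfe] at hmem
    exact absurd hmem (Finset.notMem_empty _)
  -- q in terms of p
  have hQlt : ∀ c : ℕ, ∀ h : c < N + 1, c < (a : ℕ) →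
      q ⟨c, h⟩ = Dmap n r i (p ⟨c, by omega⟩) := by
    intro c h hca
    rw [hqdef]
    have hsa : a.succAbove ⟨c, h⟩ = ⟨c, by omega⟩ := by
      rw [Fin.succAbove_of_castSucc_lt]
      · rfl
      · rw [Fin.lt_def]
        exact hca
    rw [hsa]
  have hQge : ∀ c : ℕ, ∀ h : c < N + 1, (a : ℕ) ≤ c →
      q ⟨c, h⟩ = Dmap n r i (p ⟨c + 1, by omega⟩) := by
    intro c h hca
    rw [hqdef]
    have hsa : a.succAbove ⟨c, h⟩ = ⟨c + 1, by omega⟩ := by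
      rw [Fin.succAbove_of_le_castSucc]
      · rfl
      · rw [Fin.le_def]
        exact hca
    rw [hsa]
  -- step transfer
  have hsqlt : ∀ c : ℕ, c + 1 < N + 1 → c + 1 < (a : ℕ) →
      stp n N q c = stp n (N + 1) p c := by
    intro c hc hca
    have hB : c < N + 2 := by omega
    have hA : c + 1 < N + 2 := by omega
    obtain ⟨j, hj1, hj2⟩ := hpu c (by omega)
    have hj1' : p ⟨c + 1, hA⟩ j = p ⟨c, hB⟩ j + 1 := hj1
    have hj2' : ∀ j', j' ≠ j → p ⟨c + 1, hA⟩ j' = p ⟨c, hB⟩ j' := hj2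
    have hx : q ⟨c, by omega⟩ = Dmap n r i (p ⟨c, hB⟩) := hQlt c (by omega) (by omega)
    have hy : q ⟨c + 1, by omega⟩ = Dmap n r i (p ⟨c + 1, hA⟩) := hQlt (c + 1) (by omega) (by omega)
    rcases dmap_diff n r i (p ⟨c, hB⟩) (p ⟨c + 1, hA⟩) j hj1' hj2' with hd | hz
    · rw [stp_eq n N q c (by omega), stp_eq n (N + 1) p c (by omega)]
      funext j'
      show q ⟨c + 1, by omega⟩ j' - q ⟨c, by omega⟩ j' = p ⟨c + 1, hA⟩ j' - p ⟨c, hB⟩ j'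
      rw [hx, hy]
      exact hd j'
    · exfalso
      obtain ⟨jq, hq1, hq2⟩ := hqunit c (by omega)
      have hz0 : stp n N q c jq = 0 := by
        rw [stp_eq n N q c (by omega)]
        show q ⟨c + 1, by omega⟩ jq - q ⟨c, by omega⟩ jq = 0
        rw [hx, hy, hz jq]
        ring
      omega
  have hsqge : ∀ c : ℕ, c + 1 < N + 1 → (a : ℕ) ≤ c →
      stp n N q c = stp n (N + 1) p (c + 1) := by
    intro c hc hca
    have hB : c + 1 < N + 2 := by omega
    have hA : c + 2 < N + 2 := by omega
    obtain ⟨j, hj1, hj2⟩ := hpu (c + 1) (by omega)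
    have hj1' : p ⟨c + 2, hA⟩ j = p ⟨c + 1, hB⟩ j + 1 := hj1
    have hj2' : ∀ j', j' ≠ j → p ⟨c + 2, hA⟩ j' = p ⟨c + 1, hB⟩ j' := hj2
    have hx : q ⟨c, by omega⟩ = Dmap n r i (p ⟨c + 1, hB⟩) := hQge c (by omega) (by omega)
    have hy : q ⟨c + 1, by omega⟩ = Dmap n r i (p ⟨c + 2, hA⟩) := hQge (c + 1) (by omega) (by omega)
    rcases dmap_diff n r i (p ⟨c + 1, hB⟩) (p ⟨c + 2, hA⟩) j hj1' hj2' with hd | hz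
    · rw [stp_eq n N q c (by omega), stp_eq n (N + 1) p (c + 1) (by omega)]
      funext j'
      show q ⟨c + 1, by omega⟩ j' - q ⟨c, by omega⟩ j' = p ⟨c + 2, hA⟩ j' - p ⟨c + 1, hB⟩ j'
      rw [hx, hy]
      exact hd j'
    · exfalso
      obtain ⟨jq, hq1, hq2⟩ := hqunit c (by omega)
      have hz0 : stp n N q c jq = 0 := by
        rw [stp_eq n N q c (by omega)]
        show q ⟨c + 1, by omega⟩ jq - q ⟨c, by omega⟩ jq = 0
        rw [hx, hy, hz jq]
        ring
      omega
  have hsqmid : ∀ c : ℕ, c + 1 < N + 1 → c + 1 = (a : ℕ) →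
      stp n N q c = stp n (N + 1) p c ∨ stp n N q c = stp n (N + 1) p (c + 1) := by
    intro c hc hca
    have hB : c < N + 2 := by omega
    have hM : c + 1 < N + 2 := by omega
    have hA : c + 2 < N + 2 := by omega
    obtain ⟨j0, h01, h02⟩ := hpu c (by omega)
    obtain ⟨j1, h11, h12⟩ := hpu (c + 1) (by omega)
    exact step_mid n N c r i p q hc hB hM hA j0 j1 h01 h02 h11 h12
      (hQlt c (by omega) (by omega)) (hQge (c + 1) (by omega) (by omega))
      (hpunit c (by omega)) (hpunit (c + 1) (by omega)) (hqunit c (by omega))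
  -- locating internal points of q
  have hloc : ∀ c : ℕ, 1 ≤ c → c < N → stp n N q (c - 1) = stp n N q c →
      ((a : ℕ) ≤ c + 1 ∧ c ≤ (a : ℕ)) := by
    intro c h1 h2 heq
    constructor
    · by_contra hcon
      push_neg at hcon
      have e1 : stp n N q (c - 1) = stp n (N + 1) p (c - 1) :=
        hsqlt (c - 1) (by omega) (by omega)
      have e2 : stp n N q c = stp n (N + 1) p c := hsqlt c (by omega) (by omega)
      apply hpangle (c - 1) (by omega)
      rw [show c - 1 + 1 = c by omega, ← e1, heq, e2]
    · by_contra hcon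
      push_neg at hcon
      have e1 : stp n N q (c - 1) = stp n (N + 1) p c := by
        have h := hsqge (c - 1) (by omega) (by omega)
        rwa [show c - 1 + 1 = c by omega] at h
      have e2 : stp n N q c = stp n (N + 1) p (c + 1) := hsqge c (by omega) (by omega)
      apply hpangle c (by omega)
      rw [← e1, heq, e2]
  have haux : ∀ c1 c2 : ℕ, 1 ≤ c1 → c1 < N → stp n N q (c1 - 1) = stp n N q c1 →
      1 ≤ c2 → c2 < N → stp n N q (c2 - 1) = stp n N q c2 → c1 + 1 = c2 → False := by
    intro c1 c2 h1a h1b h1c h2a h2b h2c h12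
    have l1 := hloc c1 h1a h1b h1c
    have l2 := hloc c2 h2a h2b h2c
    have hα : (a : ℕ) = c1 + 1 := by omega
    rw [show c2 - 1 = c1 by omega] at h2c
    have e2 : stp n N q c2 = stp n (N + 1) p (c2 + 1) := hsqge c2 (by omega) (by omega)
    have e0 : stp n N q (c1 - 1) = stp n (N + 1) p (c1 - 1) :=
      hsqlt (c1 - 1) (by omega) (by omega)
    rcases hsqmid c1 (by omega) (by omega) with hm | hm
    · apply hpangle (c1 - 1) (by omega)
      rw [show c1 - 1 + 1 = c1 by omega, ← e0, h1c, hm]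
    · apply hpangle (c1 + 1) (by omega)
      rw [show c1 + 1 + 1 = c2 + 1 by omega, ← hm, h2c, e2]
  -- q has at most one internal point
  have hle : internalCount n N q ≤ 1 := by
    unfold internalCount
    rw [Finset.card_le_one]
    intro b1 hb1 b2 hb2
    rw [Finset.mem_filter, cond_eq_iff] at hb1 hb2
    obtain ⟨-, h1a, h1b, h1c⟩ := hb1
    obtain ⟨-, h2a, h2b, h2c⟩ := hb2
    have l1 := hloc _ h1a h1b h1c
    have l2 := hloc _ h2a h2b h2c
    apply Fin.ext
    by_contra hne
    have hor : (b1 : ℕ) + 1 = (b2 : ℕ) ∨ (b2 : ℕ) + 1 = (b1 : ℕ) := by omega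
    rcases hor with h | h
    · exact haux _ _ h1a h1b h1c h2a h2b h2c h
    · exact haux _ _ h2a h2b h2c h1a h1b h1c h
  have hcp := count_add n (N + 1) p
  have hcq := count_add n N q
  rw [hnoint] at hcp
  omega
end

section
/- For the non-unital operad of natural operations: the space of operations represented by planar trees without stubs with n labeled white vertices of arities k_1,...,k_n, black vertices of arity ≥ 2, no edges between black vertices, and l legs is empty whenever k_1 + ... + k_n − l ≥ n (for n ≥ 1). -/
/-- Planar rooted trees with legs, stubs (arity-0 black vertices), labeled white
vertices and black vertices (children given in planar order). -/
inductive PTree (n : ℕ) : Type where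
  | leg : PTree n
  | stub : PTree n
  | white : Fin n → (m : ℕ) → (Fin m → PTree n) → PTree n
  | black : (m : ℕ) → (Fin m → PTree n) → PTree n

namespace PTree

/-- The number of legs of a tree. -/
def legs {n : ℕ} : PTree n → ℕ
  | .leg => 1
  | .stub => 0
  | .white _ m f => ∑ i : Fin m, legs (f i)
  | .black m f => ∑ i : Fin m, legs (f i)

/-- The number of white vertices carrying the label `i`. -/
def whiteCount {n : ℕ} (i : Fin n) : PTree n → ℕ
  | .leg => 0
  | .stub => 0
  | .white j m f => (if j = i then 1 else 0) + ∑ a : Fin m, whiteCount i (f a)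
  | .black m f => ∑ a : Fin m, whiteCount i (f a)

/-- Whether the root vertex is black or special (a stub). -/
def isBlackish {n : ℕ} : PTree n → Prop
  | .stub => True
  | .black _ _ => True
  | _ => False

/-- Well-formedness of an `(l; k_1,…,k_n)`-tree: every white vertex labeled `j`
has arity `k j`, black vertices have arity `≥ 2`, and no edge connects a black
vertex to a black or special vertex. -/
def WF {n : ℕ} (k : Fin n → ℕ) : PTree n → Prop
  | .leg => True
  | .stub => True
  | .white j m f => m = k j ∧ ∀ i, WF k (f i)
  | .black m f => 2 ≤ m ∧ ∀ i, WF k (f i) ∧ ¬ isBlackish (f i)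

/-- The tree has no stubs. -/
def noStub {n : ℕ} : PTree n → Prop
  | .leg => True
  | .stub => False
  | .white _ m f => ∀ i, noStub (f i)
  | .black m f => ∀ i, noStub (f i)

end PTree

lemma PTree.key {n : ℕ} (k : Fin n → ℕ) :
    ∀ T : PTree n, PTree.WF k T → PTree.noStub T →
      (∑ j, PTree.whiteCount j T * k j) + 1 ≤
        PTree.legs T + ∑ j, PTree.whiteCount j T := by
  intro T
  induction T with
  | leg => intro _ _; simp [PTree.whiteCount, PTree.legs]
  | stub => intro _ h; exact h.elim
  | white j m f ih =>
      intro hwf hns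
      obtain ⟨hm, hf⟩ := hwf
      have H : ∑ a : Fin m, ((∑ i, PTree.whiteCount i (f a) * k i) + 1) ≤
          ∑ a : Fin m, (PTree.legs (f a) + ∑ i, PTree.whiteCount i (f a)) :=
        Finset.sum_le_sum fun a _ => ih a (hf a) (hns a)
      simp only [Finset.sum_add_distrib, Finset.sum_const, Finset.card_univ,
        Fintype.card_fin, smul_eq_mul, mul_one] at H
      simp only [PTree.whiteCount, PTree.legs, add_mul, ite_mul, one_mul, zero_mul,
        Finset.sum_add_distrib, Finset.sum_ite_eq, Finset.mem_univ, if_true, Finset.sum_mul]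
      rw [Finset.sum_comm (s := Finset.univ) (t := Finset.univ)
        (f := fun i a => PTree.whiteCount i (f a) * k i),
        Finset.sum_comm (s := Finset.univ) (t := Finset.univ)
        (f := fun i a => PTree.whiteCount i (f a))]
      omega
  | black m f ih =>
      intro hwf hns
      obtain ⟨hm, hf⟩ := hwf
      have H : ∑ a : Fin m, ((∑ i, PTree.whiteCount i (f a) * k i) + 1) ≤
          ∑ a : Fin m, (PTree.legs (f a) + ∑ i, PTree.whiteCount i (f a)) :=
        Finset.sum_le_sum fun a _ => ih a (hf a).1 (hns a)
      simp only [Finset.sum_add_distrib, Finset.sum_const, Finset.card_univ,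
        Fintype.card_fin, smul_eq_mul, mul_one] at H
      simp only [PTree.whiteCount, PTree.legs, Finset.sum_add_distrib, Finset.sum_mul]
      rw [Finset.sum_comm (s := Finset.univ) (t := Finset.univ)
        (f := fun i a => PTree.whiteCount i (f a) * k i),
        Finset.sum_comm (s := Finset.univ) (t := Finset.univ)
        (f := fun i a => PTree.whiteCount i (f a))]
      omega

/-- There is no `(l; k_1,…,k_n)`-tree without stubs (white arities `k_1,…,k_n`,
each label used once, black arities `≥ 2`, no black–black edges, `l` legs)
whenever `k_1 + ⋯ + k_n - l ≥ n` (for `n ≥ 1`). -/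
theorem stmt14 (n l : ℕ) (hn : 1 ≤ n) (k : Fin n → ℕ) (T : PTree n)
    (hwf : PTree.WF k T) (hns : PTree.noStub T)
    (hlab : ∀ i : Fin n, PTree.whiteCount i T = 1)
    (hlegs : PTree.legs T = l) :
    ¬ (l + n ≤ ∑ i, k i) := by
  intro hle
  have h := PTree.key k T hwf hns
  simp only [hlab, one_mul, Finset.sum_const, Finset.card_univ, Fintype.card_fin,
    smul_eq_mul, mul_one, hlegs] at h
  omega
end
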